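/- arXiv:1903.02415 — 5 statements merged into one kernel-verified Lean document; each statement's English description precedes it below -/
import Mathlib

section
/- Assume (α+N)(β+N) = 0 with N ∈ ℤ_{≥0}, that δ, ε, γ are real with γ > 0 and δ + ε + γ + N > 1, and t < 0. Then the spectral polynomial c̃_{N+1}(B), defined by the recurrence c̃₀ = 1, tγ c̃₁(B) = B, t n(n-1+γ) c̃ₙ(B) = [(n-1)((n-2+γ)(1+t) + tδ + ε) + B] c̃_{n-1}(B) - (n-2+α)(n-2+β) c̃_{n-2}(B), has N+1 distinct real roots. -/
open Polynomial Finset Filter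

namespace Stmt5Aux

noncomputable def qseq (a b : ℕ → ℝ) : ℕ → Polynomial ℝ
  | 0 => 1
  | 1 => X - C (a 1)
  | (n+2) => (X - C (a (n+2))) * qseq a b (n+1) - C (b (n+2)) * qseq a b n

lemma qseq_monic_natDegree (a b : ℕ → ℝ) :
    ∀ n, (qseq a b n).Monic ∧ (qseq a b n).natDegree = n := by
  intro n
  induction n using Nat.twoStepInduction with
  | zero => exact ⟨monic_one, by simp [qseq]⟩
  | one => exact ⟨monic_X_sub_C _, by simp [qseq]⟩
  | more n ih ih2 =>
    obtain ⟨hm, hd⟩ := ih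
    obtain ⟨hm', hd'⟩ := ih2
    have hmul : ((X - C (a (n+2))) * qseq a b (n+1)).Monic := (monic_X_sub_C _).mul hm'
    have hdmul : ((X - C (a (n+2))) * qseq a b (n+1)).natDegree = n + 2 := by
      rw [natDegree_mul (X_sub_C_ne_zero _) hm'.ne_zero, natDegree_X_sub_C, hd']
      omega
    have hlt : (C (b (n+2)) * qseq a b n).natDegree <
        ((X - C (a (n+2))) * qseq a b (n+1)).natDegree := by
      have h1 : (C (b (n+2)) * qseq a b n).natDegree ≤ n := by
        refine natDegree_mul_le.trans ?_
        simp [hd]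
      omega
    have hdeg : (C (b (n+2)) * qseq a b n).degree <
        ((X - C (a (n+2))) * qseq a b (n+1)).degree :=
      degree_lt_degree hlt
    constructor
    · exact hmul.sub_of_left hdeg
    · show ((X - C (a (n+2))) * qseq a b (n+1) - C (b (n+2)) * qseq a b n).natDegree = n + 2
      rw [natDegree_sub_eq_left_of_natDegree_lt hlt, hdmul]

lemma prod_sign {ι : Type*} [DecidableEq ι] (s : Finset ι) (f : ι → ℝ)
    (h : ∀ j ∈ s, f j ≠ 0) :
    0 < (-1 : ℝ) ^ (s.filter (fun j => f j < 0)).card * ∏ j ∈ s, f j := by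
  induction s using Finset.induction with
  | empty => simp
  | insert x s ha ih =>
    rw [Finset.filter_insert, Finset.prod_insert ha]
    have ih' := ih (fun j hj => h j (Finset.mem_insert_of_mem hj))
    have hx := h x (Finset.mem_insert_self x s)
    by_cases hneg : f x < 0
    · rw [if_pos hneg, Finset.card_insert_of_notMem (fun hc => ha (Finset.mem_of_mem_filter _ hc))]
      have : (-1 : ℝ) ^ ((s.filter (fun j => f j < 0)).card + 1) * (f x * ∏ j ∈ s, f j)
          = (-(f x)) * ((-1 : ℝ) ^ (s.filter (fun j => f j < 0)).card * ∏ j ∈ s, f j) := by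
        ring
      rw [this]
      exact mul_pos (by linarith) ih'
    · rw [if_neg hneg]
      have hpos : 0 < f x := lt_of_le_of_ne (not_lt.mp hneg) (Ne.symm hx)
      have : (-1 : ℝ) ^ ((s.filter (fun j => f j < 0)).card) * (f x * ∏ j ∈ s, f j)
          = f x * ((-1 : ℝ) ^ (s.filter (fun j => f j < 0)).card * ∏ j ∈ s, f j) := by
        ring
      rw [this]
      exact mul_pos hpos ih'

lemma monic_eq_prod {p : Polynomial ℝ} {m : ℕ} (hm : p.Monic) (hd : p.natDegree = m)
    (z : Fin m → ℝ) (hz : Function.Injective z) (h0 : ∀ i, p.eval (z i) = 0) :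
    p = ∏ i, (X - C (z i)) := by
  have hq : (∏ i, (X - C (z i)) : Polynomial ℝ).Monic :=
    monic_prod_of_monic _ _ (fun i _ => monic_X_sub_C _)
  have hqd : (∏ i, (X - C (z i)) : Polynomial ℝ).natDegree = m := by
    rw [natDegree_prod _ _ (fun i _ => X_sub_C_ne_zero _)]
    simp
  rcases Nat.eq_zero_or_pos m with hm0 | hmpos
  · subst hm0
    rw [Finset.univ_eq_empty, Finset.prod_empty]
    exact hm.natDegree_eq_zero.mp hd
  · have hsub : p - ∏ i, (X - C (z i)) = 0 := by
      apply eq_zero_of_natDegree_lt_card_of_eval_eq_zero _ hz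
      · intro i
        rw [eval_sub, h0 i, eval_prod]
        rw [Finset.prod_eq_zero (Finset.mem_univ i) (by simp)]
        ring
      · have hdeg : (p - ∏ i, (X - C (z i))).degree < p.degree := by
          apply degree_sub_lt
          · rw [degree_eq_natDegree hm.ne_zero, degree_eq_natDegree hq.ne_zero, hd, hqd]
          · exact hm.ne_zero
          · rw [hm.leadingCoeff, hq.leadingCoeff]
        have : (p - ∏ i, (X - C (z i))).natDegree < m := by
          rcases eq_or_ne (p - ∏ i, (X - C (z i))) 0 with h | h
          · simpa [h] using hmpos
          · have h2 : (p - ∏ i, (X - C (z i))).natDegree < p.natDegree :=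
              natDegree_lt_natDegree h hdeg
            omega
        simpa using this
    exact sub_eq_zero.mp hsub
lemma exists_gt_pos {p : Polynomial ℝ} (hm : p.Monic) (hd : 0 < p.natDegree) (M : ℝ) :
    ∃ z, M < z ∧ 0 < p.eval z := by
  have hdeg : 0 < p.degree := natDegree_pos_iff_degree_pos.mp hd
  have h := p.tendsto_atTop_of_leadingCoeff_nonneg hdeg (by rw [hm.leadingCoeff]; norm_num)
  have := (h.eventually_gt_atTop 0).and (eventually_gt_atTop M)
  obtain ⟨z, hz1, hz2⟩ := this.exists
  exact ⟨z, hz2, hz1⟩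

lemma exists_lt_sign {p : Polynomial ℝ} (hm : p.Monic) {d : ℕ} (hd : p.natDegree = d)
    (hd0 : 0 < d) (M : ℝ) :
    ∃ z, z < M ∧ 0 < (-1 : ℝ) ^ d * p.eval z := by
  set r : Polynomial ℝ := C ((-1 : ℝ) ^ d) * p.comp (-X) with hr
  have hnX : ((-X : Polynomial ℝ)).natDegree = 1 := by simp
  have hrc : (p.comp (-X)).leadingCoeff = (-1 : ℝ) ^ d := by
    rw [leadingCoeff_comp (by rw [hnX]; norm_num)]
    simp [hm.leadingCoeff, hd]
  have hrm : r.Monic := by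
    unfold r
    rw [Monic, leadingCoeff_mul, leadingCoeff_C, hrc, ← pow_add, ← two_mul, pow_mul]
    norm_num
  have hrd : r.natDegree = d := by
    unfold r
    have hcne : p.comp (-X) ≠ 0 := fun h => by
      rw [h, leadingCoeff_zero] at hrc
      exact (pow_ne_zero d (by norm_num : (-1:ℝ) ≠ 0)) hrc.symm
    rw [natDegree_mul (C_ne_zero.mpr (pow_ne_zero d (by norm_num))) hcne, natDegree_C,
      natDegree_comp, hnX, hd]
    ring
  obtain ⟨z, hz1, hz2⟩ := exists_gt_pos hrm (hrd ▸ hd0) (-M)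
  refine ⟨-z, by linarith, ?_⟩
  have : r.eval z = (-1 : ℝ) ^ d * p.eval (-z) := by
    unfold r
    simp [eval_comp]
  rwa [this] at hz2

lemma exists_root_between (p : Polynomial ℝ) {A B : ℝ} (hAB : A < B)
    (h : p.eval A * p.eval B < 0) : ∃ z, A < z ∧ z < B ∧ p.eval z = 0 := by
  have hc : ContinuousOn (fun x => p.eval x) (Set.Icc A B) :=
    (p.continuous_aeval).continuousOn
  rcases lt_or_ge (p.eval A) 0 with hA | hA
  · have hB : 0 < p.eval B := by nlinarith
    have := intermediate_value_Ioo hAB.le hc (Set.mem_Ioo.mpr ⟨hA, hB⟩)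
    obtain ⟨z, hz, hz0⟩ := this
    exact ⟨z, hz.1, hz.2, hz0⟩
  · have hA' : 0 < p.eval A := lt_of_le_of_ne hA (by intro h0; rw [← h0] at h; simp at h)
    have hB : p.eval B < 0 := by nlinarith
    have := intermediate_value_Ioo' hAB.le hc (Set.mem_Ioo.mpr ⟨hB, hA'⟩)
    obtain ⟨z, hz, hz0⟩ := this
    exact ⟨z, hz.1, hz.2, hz0⟩

lemma card_filter_le_coe (n k : ℕ) :
    (Finset.univ.filter (fun j : Fin n => k ≤ (j : ℕ))).card = n - k := by
  rcases lt_or_ge k n with h | h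
  · have : (Finset.univ.filter (fun j : Fin n => k ≤ (j : ℕ))) = Finset.Ici (⟨k, h⟩ : Fin n) := by
      ext j
      simp [Fin.le_def]
    rw [this, Fin.card_Ici]
  · have : (Finset.univ.filter (fun j : Fin n => k ≤ (j : ℕ))) = ∅ := by
      ext j
      simp only [Finset.mem_filter, Finset.mem_univ, true_and, Finset.notMem_empty, iff_false]
      omega
    rw [this]
    simp
    omega

lemma sturm_step {a b : ℕ → ℝ} {n : ℕ} (hb : 0 < b (n+2))
    (x : Fin (n+1) → ℝ) (y : Fin n → ℝ) (hx : StrictMono x)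
    (hq1 : qseq a b (n+1) = ∏ i, (X - C (x i)))
    (hq0 : qseq a b n = ∏ j, (X - C (y j)))
    (hint : ∀ j : Fin n, x j.castSucc < y j ∧ y j < x j.succ) :
    ∃ z : Fin (n+2) → ℝ, StrictMono z ∧ qseq a b (n+2) = ∏ i, (X - C (z i)) ∧
      ∀ i : Fin (n+1), z i.castSucc < x i ∧ x i < z i.succ := by
  set p := qseq a b (n+2) with hp
  have hpdef : p = (X - C (a (n+2))) * qseq a b (n+1) - C (b (n+2)) * qseq a b n := rfl
  obtain ⟨hpm, hpd⟩ := qseq_monic_natDegree a b (n+2)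
  have hsign : ∀ i : Fin (n+1), 0 < (-1:ℝ)^(n+1-(i:ℕ)) * p.eval (x i) := by
    intro i
    have hlt : ∀ j : Fin n, (i:ℕ) ≤ (j:ℕ) → x i < y j := by
      intro j hj
      have h1 : x i ≤ x j.castSucc := hx.monotone (by rw [Fin.le_def]; simpa using hj)
      exact lt_of_le_of_lt h1 (hint j).1
    have hgt : ∀ j : Fin n, (j:ℕ) < (i:ℕ) → y j < x i := by
      intro j hj
      have h1 : x j.succ ≤ x i := hx.monotone (by rw [Fin.le_def]; simpa using hj)
      exact lt_of_lt_of_le (hint j).2 h1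
    have hne : ∀ j ∈ Finset.univ, x i - y j ≠ 0 := by
      intro j _
      rcases le_or_gt (i:ℕ) (j:ℕ) with h | h
      · have := hlt j h; intro hc; linarith [sub_eq_zero.mp hc]
      · have := hgt j h; intro hc; linarith [sub_eq_zero.mp hc]
    have hps := prod_sign Finset.univ (fun j : Fin n => x i - y j) hne
    have hfe : (Finset.univ.filter (fun j : Fin n => x i - y j < 0))
        = Finset.univ.filter (fun j : Fin n => (i:ℕ) ≤ (j:ℕ)) := by
      ext j
      simp only [Finset.mem_filter, Finset.mem_univ, true_and]
      constructor
      · intro h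
        by_contra hc
        have := hgt j (by omega)
        linarith
      · intro h
        have := hlt j h
        linarith
    rw [hfe, card_filter_le_coe] at hps
    have e1 : (qseq a b (n+1)).eval (x i) = 0 := by
      rw [hq1, eval_prod]
      exact Finset.prod_eq_zero (Finset.mem_univ i) (by simp)
    have hev : p.eval (x i) = -(b (n+2)) * ∏ j, (x i - y j) := by
      rw [hpdef, eval_sub, eval_mul, eval_mul, e1, mul_zero, zero_sub, eval_C, hq0, eval_prod]
      simp
    have hexp : n + 1 - (i:ℕ) = (n - (i:ℕ)) + 1 := by omega
    rw [hev, hexp, pow_succ]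
    have : ((-1:ℝ)^(n - (i:ℕ)) * -1) * (-(b (n+2)) * ∏ j, (x i - y j))
        = b (n+2) * ((-1:ℝ)^(n - (i:ℕ)) * ∏ j, (x i - y j)) := by ring
    rw [this]
    exact mul_pos hb hps
  obtain ⟨Bp, hBp1, hBp2⟩ := exists_gt_pos hpm (by omega) (x (Fin.last n))
  obtain ⟨Ap, hAp1, hAp2⟩ := exists_lt_sign hpm hpd (by omega) (x 0)
  set w : Fin (n+3) → ℝ := Fin.cases Ap (Fin.snoc x Bp) with hw
  have hw0 : w 0 = Ap := rfl
  have hwx : ∀ i : Fin (n+1), w ((i.castSucc).succ) = x i := by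
    intro i
    simp only [hw]
    rw [Fin.cases_succ, Fin.snoc_castSucc]
  have hwB : w ((Fin.last (n+1)).succ) = Bp := by
    simp only [hw]
    rw [Fin.cases_succ, Fin.snoc_last]
  have hw_sign : ∀ i : Fin (n+3), 0 < (-1:ℝ)^(n+2-(i:ℕ)) * p.eval (w i) := by
    intro i
    induction i using Fin.cases with
    | zero => simpa [hw0] using hAp2
    | succ j =>
      induction j using Fin.lastCases with
      | last =>
        have : (((Fin.last (n+1)).succ : Fin (n+3)) : ℕ) = n + 2 := by simp
        rw [hwB, this, Nat.sub_self, pow_zero, one_mul]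
        exact hBp2
      | cast k =>
        have hv : (((k.castSucc).succ : Fin (n+3)) : ℕ) = (k:ℕ) + 1 := by simp
        have : n + 2 - (((k.castSucc).succ : Fin (n+3)) : ℕ) = n + 1 - (k:ℕ) := by
          rw [hv]; omega
        rw [hwx k, this]
        exact hsign k
  have h_w_succ : ∀ i : Fin (n+2), w i.castSucc < w i.succ := by
    intro i
    induction i using Fin.cases with
    | zero =>
      have h1 : ((0 : Fin (n+2)).castSucc : Fin (n+3)) = 0 := by simp
      have h2 : ((0 : Fin (n+2)).succ : Fin (n+3)) = ((0 : Fin (n+1)).castSucc).succ := by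
        rfl
      rw [h1, h2, hw0, hwx]
      exact hAp1
    | succ j =>
      have h1 : (j.succ).castSucc = (j.castSucc).succ := (Fin.succ_castSucc j).symm
      rw [h1]
      induction j using Fin.lastCases with
      | last =>
        rw [hwx (Fin.last n)]
        have h2 : (Fin.last n).succ.succ = (Fin.last (n+1)).succ := by
          rw [Fin.succ_last]
        rw [h2, hwB]
        exact hBp1
      | cast k =>
        have h2 : ((k.castSucc).succ).succ = ((k.succ).castSucc).succ := by
          rw [Fin.succ_castSucc]
        rw [hwx, h2, hwx]
        exact hx (Fin.castSucc_lt_succ (i := k))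
  have hroot : ∀ i : Fin (n+2), ∃ z, w i.castSucc < z ∧ z < w i.succ ∧ p.eval z = 0 := by
    intro i
    apply exists_root_between p (h_w_succ i)
    have h1 := hw_sign i.castSucc
    have h2 := hw_sign i.succ
    have hv1 : ((i.castSucc : Fin (n+3)) : ℕ) = (i:ℕ) := by simp
    have hv2 : ((i.succ : Fin (n+3)) : ℕ) = (i:ℕ) + 1 := by simp
    have he : n + 2 - ((i.castSucc : Fin (n+3)) : ℕ)
        = (n + 2 - ((i.succ : Fin (n+3)) : ℕ)) + 1 := by
      rw [hv1, hv2]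
      have := i.isLt
      omega
    rw [he, pow_succ] at h1
    rcases neg_one_pow_eq_or ℝ (n + 2 - ((i.succ : Fin (n+3)) : ℕ)) with hu | hu <;>
      rw [hu] at h1 h2 <;> nlinarith [h1, h2]
  choose z hz1 hz2 hz3 using hroot
  have hzmono : StrictMono z := by
    rw [Fin.strictMono_iff_lt_succ]
    intro i
    have ha := hz2 i.castSucc
    have hb' := hz1 i.succ
    rw [Fin.succ_castSucc] at ha
    exact ha.trans hb'
  refine ⟨z, hzmono, ?_, ?_⟩
  · exact monic_eq_prod hpm hpd z hzmono.injective hz3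
  · intro i
    constructor
    · have h := hz2 i.castSucc
      rwa [hwx i] at h
    · have h := hz1 i.succ
      rwa [← Fin.succ_castSucc, hwx i] at h


lemma sturm (a b : ℕ → ℝ) : ∀ n : ℕ, (∀ m, 2 ≤ m → m ≤ n + 1 → 0 < b m) →
    ∃ (x : Fin (n+1) → ℝ) (y : Fin n → ℝ), StrictMono x ∧
      qseq a b (n+1) = ∏ i, (X - C (x i)) ∧ qseq a b n = ∏ j, (X - C (y j)) ∧
      ∀ j : Fin n, x j.castSucc < y j ∧ y j < x j.succ := by
  intro n
  induction n with
  | zero =>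
    intro _
    refine ⟨fun _ => a 1, fun j => j.elim0, ?_, ?_, ?_, fun j => j.elim0⟩
    · intro i j hij
      exact absurd (Fin.ext (by omega : (i:ℕ) = (j:ℕ))) (ne_of_lt hij)
    · show (X - C (a 1) : Polynomial ℝ) = _
      rw [Fin.prod_univ_one]
    · show (1 : Polynomial ℝ) = _
      simp
  | succ n ih =>
    intro hb
    obtain ⟨x, y, hx, hq1, hq0, hint⟩ := ih (fun m h2 hle => hb m h2 (by omega))
    obtain ⟨z, hz, hqz, hintz⟩ :=
      sturm_step (hb (n+2) (by omega) (by omega)) x y hx hq1 hq0 hint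
    exact ⟨z, x, hz, hqz, hq1, hintz⟩

noncomputable def drF (γ t : ℝ) : ℕ → ℝ := fun n => t * n * ((n : ℝ) - 1 + γ)
noncomputable def arF (γ δ ε t : ℝ) : ℕ → ℝ :=
  fun n => -(((n : ℝ) - 1) * (((n : ℝ) - 2 + γ) * (1 + t) + t * δ + ε))
noncomputable def erF (γ δ ε : ℝ) (N : ℕ) : ℕ → ℝ :=
  fun n => ((n : ℝ) - 2 - N) * ((n : ℝ) - 2 + (γ + δ + ε - 1 + N))
noncomputable def brF (γ δ ε t : ℝ) (N : ℕ) : ℕ → ℝ :=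
  fun n => erF γ δ ε N n * drF γ t (n - 1)
noncomputable def kF (γ t : ℝ) : ℕ → ℂ :=
  fun n => (∏ i ∈ Finset.range n, ((drF γ t (i+1) : ℝ) : ℂ))⁻¹

end Stmt5Aux

open Stmt5Aux Polynomial

/-- under the sign conditions `γ > 0`, `δ + ε + γ + N > 1`, `t < 0`,
the spectral polynomial `c̃_{N+1}(B)` has `N+1` distinct real roots. -/
theorem stmt5 (α β : ℂ) (γ δ ε t : ℝ) (hfuchs : (γ : ℂ) + δ + ε = α + β + 1)
    (N : ℕ) (hαβ : (α + N) * (β + N) = 0)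
    (hγ : 0 < γ) (hde : 1 < δ + ε + γ + N) (ht : t < 0)
    (c : ℕ → Polynomial ℂ) (hc0 : c 0 = 1)
    (hc1 : C ((t : ℂ) * γ) * c 1 = X)
    (hrec : ∀ n : ℕ, 2 ≤ n →
      C ((t : ℂ) * n * (n - 1 + γ)) * c n
        = (C ((n - 1 : ℂ) * ((n - 2 + γ) * (1 + t) + t * δ + ε)) + X) * c (n - 1)
          - C ((n - 2 + α) * (n - 2 + β)) * c (n - 2)) :
    ∃ S : Finset ℝ, S.card = N + 1 ∧ ∀ x ∈ S, (c (N + 1)).eval (x : ℂ) = 0 := by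
  set dr := drF γ t with hdr_def
  set ar := arF γ δ ε t with har_def
  set er := erF γ δ ε N with her_def
  set br := brF γ δ ε t N with hbr_def
  set k := kF γ t with hk_def
  -- basic sign facts
  have hdr_neg : ∀ n : ℕ, 1 ≤ n → dr n < 0 := by
    intro n hn
    have h1 : (1 : ℝ) ≤ (n : ℝ) := by exact_mod_cast hn
    have h2 : (0 : ℝ) < (n : ℝ) - 1 + γ := by linarith
    have h3 : (0 : ℝ) < (n : ℝ) := by linarith
    simp only [hdr_def, drF]
    have h4 := mul_neg_of_neg_of_pos ht (mul_pos h3 h2)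
    nlinarith [h4]
  have hdr_ne : ∀ n : ℕ, 1 ≤ n → ((dr n : ℝ) : ℂ) ≠ 0 := by
    intro n hn
    exact_mod_cast ne_of_lt (hdr_neg n hn)
  have hk_succ : ∀ n : ℕ, k (n+1) * ((dr (n+1) : ℝ) : ℂ) = k n := by
    intro n
    simp only [hk_def, kF, Finset.prod_range_succ, mul_inv]
    rw [mul_assoc, inv_mul_cancel₀ (hdr_ne (n+1) (by omega)), mul_one]
  have hk_ne : ∀ n : ℕ, k n ≠ 0 := by
    intro n
    simp only [hk_def, kF]
    apply inv_ne_zero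
    exact Finset.prod_ne_zero_iff.mpr (fun i _ => hdr_ne (i+1) (by omega))
  -- positivity of br in range
  have hbr_pos : ∀ m, 2 ≤ m → m ≤ N + 1 → 0 < br m := by
    intro m h2 hle
    have hm2 : (2 : ℝ) ≤ (m : ℝ) := by exact_mod_cast h2
    have hmN : (m : ℝ) ≤ (N : ℝ) + 1 := by exact_mod_cast hle
    have her_neg : er m < 0 := by
      simp only [her_def, erF]
      have hf1 : (m : ℝ) - 2 - N < 0 := by linarith
      have hf2 : 0 < (m : ℝ) - 2 + (γ + δ + ε - 1 + N) := by linarith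
      nlinarith
    have hdr' : dr (m - 1) < 0 := hdr_neg (m-1) (by omega)
    simp only [hbr_def, brF, ← her_def, ← hdr_def]
    nlinarith
  -- the complex coefficient is a real cast
  have hE : ∀ n : ℕ, ((n : ℂ) - 2 + α) * ((n : ℂ) - 2 + β) = ((er n : ℝ) : ℂ) := by
    intro n
    rcases mul_eq_zero.mp hαβ with h | h
    · have hα : α = -(N : ℂ) := by linear_combination h
      have hβ : β = (γ : ℂ) + δ + ε - 1 + N := by linear_combination -hfuchs - h
      simp only [her_def, erF]
      rw [hα, hβ]
      push_cast
      ring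
    · have hβ : β = -(N : ℂ) := by linear_combination h
      have hα : α = (γ : ℂ) + δ + ε - 1 + N := by linear_combination -hfuchs - h
      simp only [her_def, erF]
      rw [hα, hβ]
      push_cast
      ring
  -- the bridge between c and qseq
  have hbridge : ∀ n, n ≤ N + 1 →
      c n = C (k n) * (qseq ar br n).map (algebraMap ℝ ℂ) := by
    intro n
    induction n using Nat.twoStepInduction with
    | zero =>
      intro _
      have hk0 : k 0 = 1 := by simp [hk_def, kF]
      simp [hc0, hk0, qseq]
    | one =>
      intro _
      have htγ : ((t : ℂ) * γ) ≠ 0 := by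
        have : t * γ ≠ 0 := ne_of_lt (by nlinarith)
        exact_mod_cast this
      have hk1 : k 1 = ((t : ℂ) * γ)⁻¹ := by
        simp only [hk_def, kF, Finset.prod_range_one, drF]
        push_cast
        norm_num
      have har1 : ar 1 = 0 := by simp [har_def, arF]
      apply mul_left_cancel₀ (C_ne_zero.mpr htγ)
      rw [hc1]
      rw [show qseq ar br 1 = X - C (ar 1) from rfl, har1]
      rw [Polynomial.map_sub, Polynomial.map_X, Polynomial.map_C]
      rw [hk1, map_zero, C_0, sub_zero, ← mul_assoc, ← C_mul, mul_inv_cancel₀ htγ, C_1, one_mul]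
    | more n ihn ihn1 =>
      intro hle
      have hr := hrec (n+2) (by omega)
      have e1 : n + 2 - 1 = n + 1 := rfl
      have e2 : n + 2 - 2 = n := rfl
      rw [e1, e2] at hr
      push_cast at hr
      -- convert the three coefficients to real casts
      have hd2 : (t : ℂ) * ((n : ℂ) + 2) * ((n : ℂ) + 2 - 1 + (γ : ℂ)) = ((dr (n+2) : ℝ) : ℂ) := by
        simp only [hdr_def, drF]
        push_cast
        ring
      have ha2 : (C (((n : ℂ) + 2 - 1) * (((n : ℂ) + 2 - 2 + (γ : ℂ)) * (1 + (t : ℂ))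
            + (t : ℂ) * (δ : ℂ) + (ε : ℂ))) + X : Polynomial ℂ)
          = X - C ((ar (n+2) : ℝ) : ℂ) := by
        have : ((ar (n+2) : ℝ) : ℂ) = -(((n : ℂ) + 2 - 1) * (((n : ℂ) + 2 - 2 + (γ : ℂ)) * (1 + (t : ℂ))
            + (t : ℂ) * (δ : ℂ) + (ε : ℂ))) := by
          simp only [har_def, arF]
          push_cast
          ring
        rw [this, map_neg, sub_neg_eq_add]
        ring
      have he2 : ((n : ℂ) + 2 - 2 + α) * ((n : ℂ) + 2 - 2 + β) = ((er (n+2) : ℝ) : ℂ) := by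
        have := hE (n+2)
        push_cast at this
        convert this using 2 <;> push_cast <;> ring
      rw [hd2, he2, ha2] at hr
      apply mul_left_cancel₀ (C_ne_zero.mpr (hdr_ne (n+2) (by omega)))
      rw [hr, ihn1 (by omega), ihn (by omega)]
      rw [show qseq ar br (n+2)
          = (X - C (ar (n+2))) * qseq ar br (n+1) - C (br (n+2)) * qseq ar br n from rfl]
      rw [Polynomial.map_sub, Polynomial.map_mul, Polynomial.map_mul, Polynomial.map_sub,
        Polynomial.map_X, Polynomial.map_C, Polynomial.map_C]
      simp only [Complex.coe_algebraMap]
      have E1 : (C ((dr (n+2) : ℝ) : ℂ) * C (k (n+2)) : Polynomial ℂ) = C (k (n+1)) := by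
        rw [← C_mul]
        congr 1
        linear_combination hk_succ (n+1)
      have E2 : (C ((er (n+2) : ℝ) : ℂ) * C (k n) : Polynomial ℂ)
          = C (k (n+1)) * C ((br (n+2) : ℝ) : ℂ) := by
        rw [← C_mul, ← C_mul]
        congr 1
        have hbr2 : (br (n+2) : ℝ) = er (n+2) * dr (n+1) := rfl
        rw [hbr2]
        push_cast
        linear_combination (-((er (n+2) : ℝ) : ℂ)) * hk_succ n
      linear_combination (C ((br (n+2) : ℝ) : ℂ) * Polynomial.map (algebraMap ℝ ℂ) (qseq ar br n)
          - (X - C ((ar (n+2) : ℝ) : ℂ)) * Polynomial.map (algebraMap ℝ ℂ) (qseq ar br (n+1))) * E1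
        - (Polynomial.map (algebraMap ℝ ℂ) (qseq ar br n)) * E2
  -- final assembly
  obtain ⟨x, y, hxm, hqprod, -, -⟩ := sturm ar br N hbr_pos
  refine ⟨Finset.image x Finset.univ, ?_, ?_⟩
  · rw [Finset.card_image_of_injective _ hxm.injective, Finset.card_univ, Fintype.card_fin]
  · intro r hr'
    obtain ⟨i, -, rfl⟩ := Finset.mem_image.mp hr'
    rw [hbridge (N+1) le_rfl, eval_mul, eval_C]
    have hz : (qseq ar br (N+1)).eval (x i) = 0 := by
      rw [hqprod, eval_prod]
      exact Finset.prod_eq_zero (Finset.mem_univ i) (by simp)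
    rw [eval_map, ← Complex.coe_algebraMap, Polynomial.eval₂_at_apply, hz]
    simp
end

section
/- If g(x) = x^μ (1 + c₁ x + c₂ x² + ⋯) is a formal solution of the q-Heun equation (x - q^{h₁+1/2}t₁)(x - q^{h₂+1/2}t₂) g(x/q) + q^{α₁+α₂}(x - q^{l₁-1/2}t₁)(x - q^{l₂-1/2}t₂) g(qx) - {(q^{α₁}+q^{α₂})x² + Ex + q^{(h₁+h₂+l₁+l₂+α₁+α₂)/2}(q^{β/2}+q^{-β/2}) t₁t₂} g(x) = 0, with t₁t₂ ≠ 0 and q not a root of unity, then μ = (h₁+h₂-l₁-l₂-α₁-α₂-β+2)/2 or μ = (h₁+h₂-l₁-l₂-α₁-α₂+β+2)/2. -/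
open Set Filter Topology

private lemma exp_quad_aux {a b cc d : ℝ} (hs : a + b = cc + d)
    (h : Real.exp a + Real.exp b = Real.exp cc + Real.exp d) : a = cc ∨ a = d := by
  have h1 : Real.exp a * Real.exp b = Real.exp cc * Real.exp d := by
    rw [← Real.exp_add, ← Real.exp_add, hs]
  have key : (Real.exp a - Real.exp cc) * (Real.exp a - Real.exp d) = 0 := by
    linear_combination (Real.exp a) * h - h1
  rcases mul_eq_zero.1 key with h' | h'
  · exact Or.inl (Real.exp_injective (by linarith))
  · exact Or.inr (Real.exp_injective (by linarith))

/-- the exponents of a local (Frobenius-type) solution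
`g(x) = x^μ (1 + c₁ x + ⋯)` of the q-Heun equation. -/
theorem stmt6 (h₁ h₂ l₁ l₂ α₁ α₂ β t₁ t₂ E q μ : ℝ)
    (hq0 : 0 < q) (hq1 : q ≠ 1) (ht : t₁ * t₂ ≠ 0)
    (c : ℕ → ℝ) (hc0 : c 0 = 1) (r : ℝ) (hr : 0 < r)
    (g : ℝ → ℝ)
    (hsum : ∀ x ∈ Ioo (0 : ℝ) r, Summable fun n : ℕ => c n * x ^ n)
    (hg : ∀ x ∈ Ioo (0 : ℝ) r, g x = x ^ μ * ∑' n : ℕ, c n * x ^ n)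
    (heq : ∀ x ∈ Ioo (0 : ℝ) r, x / q ∈ Ioo (0 : ℝ) r → q * x ∈ Ioo (0 : ℝ) r →
      (x - q ^ (h₁ + 1/2) * t₁) * (x - q ^ (h₂ + 1/2) * t₂) * g (x / q)
      + q ^ (α₁ + α₂) * (x - q ^ (l₁ - 1/2) * t₁) * (x - q ^ (l₂ - 1/2) * t₂) * g (q * x)
      - ((q ^ α₁ + q ^ α₂) * x ^ 2 + E * x
          + q ^ ((h₁ + h₂ + l₁ + l₂ + α₁ + α₂) / 2) * (q ^ (β / 2) + q ^ (-β / 2)) * t₁ * t₂)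
        * g x = 0) :
    μ = (h₁ + h₂ - l₁ - l₂ - α₁ - α₂ - β + 2) / 2 ∨
    μ = (h₁ + h₂ - l₁ - l₂ - α₁ - α₂ + β + 2) / 2 := by
  classical
  set S : ℝ → ℝ := fun y => ∑' n : ℕ, c n * y ^ n with hSdef
  have hgS : ∀ y ∈ Ioo (0 : ℝ) r, g y = y ^ μ * S y := hg
  -- bound on coefficients
  have hx₀ : (r / 2 : ℝ) ∈ Ioo (0 : ℝ) r := ⟨by linarith, by linarith⟩
  obtain ⟨C, hC⟩ : BddAbove (Set.range fun n : ℕ => |c n * (r / 2) ^ n|) :=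
    ((hsum _ hx₀).tendsto_atTop_zero.abs.bddAbove_range)
  have hCn : ∀ n : ℕ, |c n| * (r / 2) ^ n ≤ C := by
    intro n
    have := hC (Set.mem_range_self n)
    rwa [abs_mul, abs_pow, abs_of_pos (by linarith : (0:ℝ) < r / 2)] at this
  -- continuity of S near 0
  have hcont : ContinuousOn S (Icc (0 : ℝ) (r / 4)) := by
    apply continuousOn_tsum (u := fun n : ℕ => C * (1 / 2) ^ n)
    · intro i
      exact (continuous_const.mul (continuous_pow i)).continuousOn
    · exact (summable_geometric_of_lt_one (by norm_num) (by norm_num)).mul_left C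
    · intro n x hx
      have hx0 : (0 : ℝ) ≤ x := hx.1
      have h1 : ‖c n * x ^ n‖ = |c n| * x ^ n := by
        rw [Real.norm_eq_abs, abs_mul, abs_pow, abs_of_nonneg hx0]
      rw [h1]
      calc |c n| * x ^ n ≤ |c n| * (r / 4) ^ n := by
            exact mul_le_mul_of_nonneg_left (pow_le_pow_left₀ hx0 hx.2 n) (abs_nonneg _)
        _ = |c n| * (r / 2) ^ n * (1 / 2) ^ n := by
            rw [show (r / 4 : ℝ) = (r / 2) * (1 / 2) by ring, mul_pow, mul_assoc]
        _ ≤ C * (1 / 2) ^ n := by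
            exact mul_le_mul_of_nonneg_right (hCn n) (by positivity)
  have hS0 : S 0 = 1 := by
    have h0 : S 0 = c 0 * (0 : ℝ) ^ (0 : ℕ) := by
      apply tsum_eq_single 0
      intro n hn
      simp [zero_pow hn]
    simp [h0, hc0]
  -- S tends to 1 on 𝓝[>] 0
  have hT : Tendsto S (𝓝[>] (0 : ℝ)) (𝓝 1) := by
    have h1 : Tendsto S (𝓝[Icc (0:ℝ) (r/4)] 0) (𝓝 (S 0)) :=
      hcont 0 ⟨le_refl 0, by linarith⟩
    rw [hS0] at h1
    apply h1.mono_left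
    rw [nhdsWithin_le_iff]
    filter_upwards [Ioo_mem_nhdsGT (by linarith : (0:ℝ) < r / 4)] with x hx
    exact ⟨hx.1.le, hx.2.le⟩
  have hmapdiv : Tendsto (fun x : ℝ => x / q) (𝓝[>] (0:ℝ)) (𝓝[>] (0:ℝ)) := by
    apply tendsto_nhdsWithin_of_tendsto_nhds_of_eventually_within
    · have h := (continuous_id.div_const q).tendsto (0:ℝ)
      simp only [id_eq, zero_div] at h
      exact h.mono_left nhdsWithin_le_nhds
    · filter_upwards [self_mem_nhdsWithin] with x hx
      exact div_pos hx hq0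
  have hmapmul : Tendsto (fun x : ℝ => q * x) (𝓝[>] (0:ℝ)) (𝓝[>] (0:ℝ)) := by
    apply tendsto_nhdsWithin_of_tendsto_nhds_of_eventually_within
    · have h : Tendsto (fun x : ℝ => q * x) (𝓝 (0:ℝ)) (𝓝 (q * 0)) :=
        (continuous_const.mul continuous_id).tendsto 0
      rw [mul_zero] at h
      exact h.mono_left nhdsWithin_le_nhds
    · filter_upwards [self_mem_nhdsWithin] with x hx
      exact mul_pos hq0 hx
  set K : ℝ := q ^ ((h₁ + h₂ + l₁ + l₂ + α₁ + α₂) / 2) * (q ^ (β / 2) + q ^ (-β / 2)) * t₁ * t₂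
    with hKdef
  set F : ℝ → ℝ := fun x =>
      (x - q ^ (h₁ + 1/2) * t₁) * (x - q ^ (h₂ + 1/2) * t₂) * (q ^ (-μ) * S (x / q))
      + q ^ (α₁ + α₂) * (x - q ^ (l₁ - 1/2) * t₁) * (x - q ^ (l₂ - 1/2) * t₂)
          * (q ^ μ * S (q * x))
      - ((q ^ α₁ + q ^ α₂) * x ^ 2 + E * x + K) * S x with hFdef
  -- F vanishes eventually on 𝓝[>] 0
  have hFev : ∀ᶠ x in 𝓝[>] (0:ℝ), F x = 0 := by
    have hε : (0:ℝ) < min r (min (r * q) (r / q)) := by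
      apply lt_min hr
      exact lt_min (by positivity) (by positivity)
    filter_upwards [Ioo_mem_nhdsGT hε] with x hx
    obtain ⟨hx0, hxε⟩ := hx
    have hxr : x ∈ Ioo (0:ℝ) r := ⟨hx0, lt_of_lt_of_le hxε (min_le_left _ _)⟩
    have hxq : x / q ∈ Ioo (0:ℝ) r := by
      constructor
      · exact div_pos hx0 hq0
      · rw [div_lt_iff₀ hq0]
        exact lt_of_lt_of_le hxε (le_trans (min_le_right _ _) (min_le_left _ _))
    have hqx : q * x ∈ Ioo (0:ℝ) r := by
      constructor
      · exact mul_pos hq0 hx0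
      · have : x < r / q := lt_of_lt_of_le hxε (le_trans (min_le_right _ _) (min_le_right _ _))
        rw [mul_comm]
        exact (lt_div_iff₀ hq0).mp this
    have h0 := heq x hxr hxq hqx
    rw [hgS x hxr, hgS _ hxq, hgS _ hqx] at h0
    have hpow1 : (x / q) ^ μ = x ^ μ * q ^ (-μ) := by
      rw [Real.div_rpow hx0.le hq0.le, Real.rpow_neg hq0.le, div_eq_mul_inv]
    have hpow2 : (q * x) ^ μ = x ^ μ * q ^ μ := by
      rw [Real.mul_rpow hq0.le hx0.le, mul_comm]
    rw [hpow1, hpow2] at h0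
    have hxμ : (0:ℝ) < x ^ μ := Real.rpow_pos_of_pos hx0 μ
    have hmul : x ^ μ * F x = 0 := by
      rw [hFdef]
      linear_combination h0
    rcases mul_eq_zero.1 hmul with h | h
    · exact absurd h hxμ.ne'
    · exact h
  -- limit of F at 0⁺
  set L : ℝ :=
      (0 - q ^ (h₁ + 1/2) * t₁) * (0 - q ^ (h₂ + 1/2) * t₂) * (q ^ (-μ) * 1)
      + q ^ (α₁ + α₂) * (0 - q ^ (l₁ - 1/2) * t₁) * (0 - q ^ (l₂ - 1/2) * t₂) * (q ^ μ * 1)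
      - ((q ^ α₁ + q ^ α₂) * 0 ^ 2 + E * 0 + K) * 1 with hLdef
  have hFL : Tendsto F (𝓝[>] (0:ℝ)) (𝓝 L) := by
    have tpoly1 : Tendsto (fun x : ℝ => (x - q ^ (h₁ + 1/2) * t₁) * (x - q ^ (h₂ + 1/2) * t₂))
        (𝓝[>] (0:ℝ)) (𝓝 ((0 - q ^ (h₁ + 1/2) * t₁) * (0 - q ^ (h₂ + 1/2) * t₂))) :=
      (((continuous_id.sub continuous_const).mul
        (continuous_id.sub continuous_const)).tendsto 0).mono_left nhdsWithin_le_nhds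
    have tpoly2 : Tendsto (fun x : ℝ =>
          q ^ (α₁ + α₂) * (x - q ^ (l₁ - 1/2) * t₁) * (x - q ^ (l₂ - 1/2) * t₂))
        (𝓝[>] (0:ℝ))
        (𝓝 (q ^ (α₁ + α₂) * (0 - q ^ (l₁ - 1/2) * t₁) * (0 - q ^ (l₂ - 1/2) * t₂))) :=
      (((continuous_const.mul (continuous_id.sub continuous_const)).mul
        (continuous_id.sub continuous_const)).tendsto 0).mono_left nhdsWithin_le_nhds
    have tpoly3 : Tendsto (fun x : ℝ => (q ^ α₁ + q ^ α₂) * x ^ 2 + E * x + K)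
        (𝓝[>] (0:ℝ)) (𝓝 ((q ^ α₁ + q ^ α₂) * 0 ^ 2 + E * 0 + K)) :=
      (((continuous_const.mul (continuous_pow 2)).add
        (continuous_const.mul continuous_id)).add continuous_const).tendsto 0
        |>.mono_left nhdsWithin_le_nhds
    have tS1 : Tendsto (fun x : ℝ => q ^ (-μ) * S (x / q)) (𝓝[>] (0:ℝ)) (𝓝 (q ^ (-μ) * 1)) :=
      tendsto_const_nhds.mul (hT.comp hmapdiv)
    have tS2 : Tendsto (fun x : ℝ => q ^ μ * S (q * x)) (𝓝[>] (0:ℝ)) (𝓝 (q ^ μ * 1)) :=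
      tendsto_const_nhds.mul (hT.comp hmapmul)
    have tS3 : Tendsto (fun x : ℝ => ((q ^ α₁ + q ^ α₂) * x ^ 2 + E * x + K) * S x)
        (𝓝[>] (0:ℝ)) (𝓝 (((q ^ α₁ + q ^ α₂) * 0 ^ 2 + E * 0 + K) * 1)) := tpoly3.mul hT
    exact ((tpoly1.mul tS1).add (tpoly2.mul tS2)).sub tS3
  have hL0 : L = 0 := by
    have hconst : Tendsto (fun _ : ℝ => (0:ℝ)) (𝓝[>] (0:ℝ)) (𝓝 L) :=
      hFL.congr' (hFev.mono fun x hx => hx)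
    exact (tendsto_nhds_unique hconst tendsto_const_nhds)
  -- algebraic reduction
  rw [hLdef, hKdef] at hL0
  have e1 : q ^ (h₁ + 1/2) * q ^ (h₂ + 1/2) * q ^ (-μ) = q ^ (h₁ + h₂ + 1 - μ) := by
    rw [← Real.rpow_add hq0, ← Real.rpow_add hq0]; congr 1; ring
  have e2 : q ^ (α₁ + α₂) * (q ^ (l₁ - 1/2) * q ^ (l₂ - 1/2)) * q ^ μ
      = q ^ (α₁ + α₂ + l₁ + l₂ - 1 + μ) := by
    rw [← Real.rpow_add hq0, ← Real.rpow_add hq0, ← Real.rpow_add hq0]; congr 1; ring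
  have e3 : q ^ ((h₁ + h₂ + l₁ + l₂ + α₁ + α₂) / 2) * q ^ (β / 2)
      = q ^ ((h₁ + h₂ + l₁ + l₂ + α₁ + α₂) / 2 + β / 2) := by
    rw [← Real.rpow_add hq0]
  have e4 : q ^ ((h₁ + h₂ + l₁ + l₂ + α₁ + α₂) / 2) * q ^ (-β / 2)
      = q ^ ((h₁ + h₂ + l₁ + l₂ + α₁ + α₂) / 2 + -β / 2) := by
    rw [← Real.rpow_add hq0]
  have hkey : q ^ (h₁ + h₂ + 1 - μ) + q ^ (α₁ + α₂ + l₁ + l₂ - 1 + μ)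
      = q ^ ((h₁ + h₂ + l₁ + l₂ + α₁ + α₂) / 2 + β / 2)
        + q ^ ((h₁ + h₂ + l₁ + l₂ + α₁ + α₂) / 2 + -β / 2) := by
    apply mul_right_cancel₀ ht
    linear_combination hL0 - (t₁ * t₂) * e1 - (t₁ * t₂) * e2 + (t₁ * t₂) * e3
      + (t₁ * t₂) * e4
  simp only [Real.rpow_def_of_pos hq0] at hkey
  have hlg : Real.log q ≠ 0 := Real.log_ne_zero_of_pos_of_ne_one hq0 hq1
  have hsum' : Real.log q * (h₁ + h₂ + 1 - μ) + Real.log q * (α₁ + α₂ + l₁ + l₂ - 1 + μ)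
      = Real.log q * ((h₁ + h₂ + l₁ + l₂ + α₁ + α₂) / 2 + β / 2)
        + Real.log q * ((h₁ + h₂ + l₁ + l₂ + α₁ + α₂) / 2 + -β / 2) := by ring
  rcases exp_quad_aux hsum' hkey with h' | h'
  · left
    have := mul_left_cancel₀ hlg h'
    linarith
  · right
    have := mul_left_cancel₀ hlg h'
    linarith
end

section
/- Set q = 1 + ε, E = -2(t₁+t₂) - εC₁ + ε²(B - C₂) where C₁ = (α₁+α₂)(t₁+t₂) + (l₁+h₁)t₁ + (l₂+h₂)t₂ and C₂ = (t₁/2){h₁² + (α₁+α₂+l₁-1)² - 1/2} + (t₂/2){h₂² + (α₁+α₂+l₂-1)² - 1/2}. For a thrice-differentiable function g, expand the left-hand side of the q-Heun equation (x - q^{h₁+1/2}t₁)(x - q^{h₂+1/2}t₂)g(x/q) + q^{α₁+α₂}(x - q^{l₁-1/2}t₁)(x - q^{l₂-1/2}t₂)g(qx) - {(q^{α₁}+q^{α₂})x² + Ex + q^{(h₁+h₂+l₁+l₂+α₁+α₂)/2}(q^{β/2}+q^{-β/2})t₁t₂}g(x) in powers of ε. Then the coefficients of ε⁰ and ε¹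 vanish identically, and the coefficient of ε² equals x²(x-t₁)(x-t₂)g'' + [(1+h₂-l₂)x(x-t₁) + (1+h₁-l₁)x(x-t₂) + (l̃-1)(x-t₁)(x-t₂)]xg' + [α₁α₂x² - Bx + t₁t₂(l̃/2-1+β/2)(l̃/2-1-β/2)]g, where l̃ = l₁+l₂+α₁+α₂-h₁-h₂. -/
open Filter Asymptotics Topology

/-- Second-order little-o expansion at `0`. -/
def Ex (f : ℝ → ℝ) (a₀ a₁ a₂ : ℝ) : Prop :=
  (fun ε => f ε - (a₀ + a₁ * ε + a₂ * ε ^ 2)) =o[𝓝 (0:ℝ)] fun ε => ε ^ 2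

lemma Ex_rem {f : ℝ → ℝ} {a₀ a₁ a₂ : ℝ} (h : ∀ ε, f ε = a₀ + a₁ * ε + a₂ * ε ^ 2) :
    Ex f a₀ a₁ a₂ := by
  unfold Ex
  have h0 : (fun _ : ℝ => (0:ℝ)) =o[𝓝 (0:ℝ)] fun ε => ε ^ 2 := isLittleO_zero _ _
  exact h0.congr' (Eventually.of_forall fun ε => by beta_reduce; rw [h ε]; ring) EventuallyEq.rfl

lemma Ex.congr_c {f : ℝ → ℝ} {a₀ a₁ a₂ b₀ b₁ b₂ : ℝ} (h : Ex f a₀ a₁ a₂)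
    (h₀ : a₀ = b₀) (h₁ : a₁ = b₁) (h₂ : a₂ = b₂) : Ex f b₀ b₁ b₂ := by
  subst h₀; subst h₁; subst h₂; exact h

lemma Ex.congr_fun {f g : ℝ → ℝ} {a₀ a₁ a₂ : ℝ} (h : Ex f a₀ a₁ a₂)
    (he : ∀ ε, f ε = g ε) : Ex g a₀ a₁ a₂ := by
  unfold Ex at h ⊢
  exact h.congr' (Eventually.of_forall fun ε => by beta_reduce; rw [he ε]) EventuallyEq.rfl

lemma Ex.add {f g : ℝ → ℝ} {a₀ a₁ a₂ b₀ b₁ b₂ : ℝ} (hf : Ex f a₀ a₁ a₂) (hg : Ex g b₀ b₁ b₂) :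
    Ex (fun ε => f ε + g ε) (a₀ + b₀) (a₁ + b₁) (a₂ + b₂) := by
  unfold Ex at hf hg ⊢
  exact (hf.add hg).congr' (Eventually.of_forall fun ε => by ring) EventuallyEq.rfl

lemma Ex.sub {f g : ℝ → ℝ} {a₀ a₁ a₂ b₀ b₁ b₂ : ℝ} (hf : Ex f a₀ a₁ a₂) (hg : Ex g b₀ b₁ b₂) :
    Ex (fun ε => f ε - g ε) (a₀ - b₀) (a₁ - b₁) (a₂ - b₂) := by
  unfold Ex at hf hg ⊢
  exact (hf.sub hg).congr' (Eventually.of_forall fun ε => by ring) EventuallyEq.rfl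

lemma Ex.tendsto {f : ℝ → ℝ} {a₀ a₁ a₂ : ℝ} (hf : Ex f a₀ a₁ a₂) :
    Tendsto f (𝓝 0) (𝓝 a₀) := by
  have hsq : Tendsto (fun ε : ℝ => ε ^ 2) (𝓝 0) (𝓝 0) := by
    simpa using (continuous_pow 2).tendsto (0:ℝ)
  have h1 : Tendsto (fun ε : ℝ => f ε - (a₀ + a₁ * ε + a₂ * ε ^ 2)) (𝓝 0) (𝓝 0) := by
    rw [← isLittleO_one_iff ℝ]
    exact hf.trans_isBigO (hsq.isBigO_one ℝ)
  have h2 : Tendsto (fun ε : ℝ => a₀ + a₁ * ε + a₂ * ε ^ 2) (𝓝 0) (𝓝 a₀) := by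
    have hc : Continuous fun ε : ℝ => a₀ + a₁ * ε + a₂ * ε ^ 2 := by continuity
    have h := hc.tendsto 0
    norm_num at h
    exact h
  have h3 := h1.add h2
  norm_num at h3
  exact h3.congr (fun ε => by ring)

lemma Ex.mul {f g : ℝ → ℝ} {a₀ a₁ a₂ b₀ b₁ b₂ : ℝ} (hf : Ex f a₀ a₁ a₂) (hg : Ex g b₀ b₁ b₂) :
    Ex (fun ε => f ε * g ε) (a₀ * b₀) (a₀ * b₁ + a₁ * b₀) (a₀ * b₂ + a₁ * b₁ + a₂ * b₀) := by
  have hgO : g =O[𝓝 (0:ℝ)] (fun _ => (1:ℝ)) := hg.tendsto.isBigO_one ℝ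
  have hPaO : (fun ε : ℝ => a₀ + a₁ * ε + a₂ * ε ^ 2) =O[𝓝 (0:ℝ)] (fun _ => (1:ℝ)) := by
    have hc : Continuous fun ε : ℝ => a₀ + a₁ * ε + a₂ * ε ^ 2 := by continuity
    exact (hc.tendsto 0).isBigO_one ℝ
  unfold Ex at hf hg ⊢
  have t1 : (fun ε : ℝ => (f ε - (a₀ + a₁ * ε + a₂ * ε ^ 2)) * g ε) =o[𝓝 (0:ℝ)]
      fun ε => ε ^ 2 := by
    have h := hf.mul_isBigO hgO
    exact h.congr' EventuallyEq.rfl (Eventually.of_forall fun ε => by ring)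
  have t2 : (fun ε : ℝ => (a₀ + a₁ * ε + a₂ * ε ^ 2) * (g ε - (b₀ + b₁ * ε + b₂ * ε ^ 2)))
      =o[𝓝 (0:ℝ)] fun ε => ε ^ 2 := by
    have h := hPaO.mul_isLittleO hg
    exact h.congr' EventuallyEq.rfl (Eventually.of_forall fun ε => by ring)
  have t3 : (fun ε : ℝ => ε ^ 2 * ((a₁ * b₂ + a₂ * b₁) * ε + a₂ * b₂ * ε ^ 2))
      =o[𝓝 (0:ℝ)] fun ε => ε ^ 2 := by
    have hq : Tendsto (fun ε : ℝ => (a₁ * b₂ + a₂ * b₁) * ε + a₂ * b₂ * ε ^ 2) (𝓝 0) (𝓝 0) := by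
      have hc : Continuous fun ε : ℝ => (a₁ * b₂ + a₂ * b₁) * ε + a₂ * b₂ * ε ^ 2 := by
        continuity
      have h := hc.tendsto 0
      norm_num at h
      exact h
    have h := (isBigO_refl (fun ε : ℝ => ε ^ 2) (𝓝 (0:ℝ))).mul_isLittleO
      ((isLittleO_one_iff ℝ).mpr hq)
    exact h.congr' EventuallyEq.rfl (Eventually.of_forall fun ε => by ring)
  have h := (t1.add t2).add t3
  exact h.congr' (Eventually.of_forall fun ε => by ring) EventuallyEq.rfl

lemma Ex_const (c : ℝ) : Ex (fun _ => c) c 0 0 := Ex_rem fun ε => by ring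

lemma Ex.mul_const {f : ℝ → ℝ} {a₀ a₁ a₂ : ℝ} (hf : Ex f a₀ a₁ a₂) (c : ℝ) :
    Ex (fun ε => f ε * c) (a₀ * c) (a₁ * c) (a₂ * c) :=
  ((hf.mul (Ex_const c)).congr_fun fun _ => rfl).congr_c (by ring) (by ring) (by ring)

lemma Ex.const_mul {f : ℝ → ℝ} {a₀ a₁ a₂ : ℝ} (hf : Ex f a₀ a₁ a₂) (c : ℝ) :
    Ex (fun ε => c * f ε) (c * a₀) (c * a₁) (c * a₂) :=
  (((Ex_const c).mul hf).congr_fun fun _ => rfl).congr_c (by ring) (by ring) (by ring)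

lemma Ex.const_sub {f : ℝ → ℝ} {a₀ a₁ a₂ : ℝ} (hf : Ex f a₀ a₁ a₂) (c : ℝ) :
    Ex (fun ε => c - f ε) (c - a₀) (-a₁) (-a₂) :=
  (((Ex_const c).sub hf).congr_fun fun _ => rfl).congr_c (by ring) (by ring) (by ring)

lemma Ex_of_sub {f g : ℝ → ℝ} {a₀ a₁ a₂ : ℝ}
    (hd : (fun ε => f ε - g ε) =o[𝓝 (0:ℝ)] fun ε => ε ^ 2) (hg : Ex g a₀ a₁ a₂) :
    Ex f a₀ a₁ a₂ := by
  unfold Ex at hg ⊢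
  exact (hd.add hg).congr' (Eventually.of_forall fun ε => by ring) EventuallyEq.rfl

/-- Second-order Taylor expansion with little-o remainder, at a point. -/
lemma taylor2 {f f' : ℝ → ℝ} {x₀ d2 : ℝ}
    (hf : ∀ᶠ y in 𝓝 x₀, HasDerivAt f (f' y) y)
    (hf' : HasDerivAt f' d2 x₀) :
    (fun y => f y - f x₀ - f' x₀ * (y - x₀) - d2 / 2 * (y - x₀) ^ 2)
      =o[𝓝 x₀] fun y => (y - x₀) ^ 2 := by
  have hφd : ∀ᶠ y in 𝓝 x₀,
      HasDerivAt (fun y => f y - f x₀ - f' x₀ * (y - x₀) - d2 / 2 * (y - x₀) ^ 2)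
        (f' y - f' x₀ - d2 * (y - x₀)) y := by
    filter_upwards [hf] with y hy
    have h1 : HasDerivAt (fun y : ℝ => f' x₀ * (y - x₀)) (f' x₀) y := by
      simpa using ((hasDerivAt_id y).sub_const x₀).const_mul (f' x₀)
    have h2 : HasDerivAt (fun y : ℝ => d2 / 2 * (y - x₀) ^ 2) (d2 * (y - x₀)) y := by
      have h := (((hasDerivAt_id y).sub_const x₀).pow 2).const_mul (d2 / 2)
      refine h.congr_deriv ?_
      simp
      ring
    exact ((hy.sub_const (f x₀)).sub h1).sub h2
  have hψd : ∀ y : ℝ, HasDerivAt (fun y : ℝ => (y - x₀) ^ 2) (2 * (y - x₀)) y := by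
    intro y
    have h := ((hasDerivAt_id y).sub_const x₀).pow 2
    refine h.congr_deriv ?_
    simp
  have hne : ∀ᶠ y in 𝓝[≠] x₀, (2:ℝ) * (y - x₀) ≠ 0 := by
    filter_upwards [self_mem_nhdsWithin] with y hy
    exact mul_ne_zero two_ne_zero (sub_ne_zero.mpr hy)
  have hφ0 : f x₀ - f x₀ - f' x₀ * (x₀ - x₀) - d2 / 2 * (x₀ - x₀) ^ 2 = 0 := by ring
  have hφt : Tendsto (fun y => f y - f x₀ - f' x₀ * (y - x₀) - d2 / 2 * (y - x₀) ^ 2)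
      (𝓝[≠] x₀) (𝓝 0) := by
    have hc := (hφd.self_of_nhds).continuousAt.tendsto
    rw [hφ0] at hc
    exact tendsto_nhdsWithin_of_tendsto_nhds hc
  have hψt : Tendsto (fun y : ℝ => (y - x₀) ^ 2) (𝓝[≠] x₀) (𝓝 0) := by
    have hc : Continuous fun y : ℝ => (y - x₀) ^ 2 := by continuity
    have h := hc.tendsto x₀
    norm_num at h
    exact tendsto_nhdsWithin_of_tendsto_nhds h
  have hdiv : Tendsto (fun y => (f' y - f' x₀ - d2 * (y - x₀)) / (2 * (y - x₀)))
      (𝓝[≠] x₀) (𝓝 0) := by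
    have hs := hasDerivAt_iff_tendsto_slope.mp hf'
    have h0 : Tendsto (fun y => (slope f' x₀ y - d2) / 2) (𝓝[≠] x₀) (𝓝 0) := by
      have h := (hs.sub_const d2).div_const 2
      norm_num at h
      exact h
    refine Tendsto.congr' ?_ h0
    filter_upwards [self_mem_nhdsWithin] with y hy
    have hyx : y - x₀ ≠ 0 := sub_ne_zero.mpr hy
    rw [slope_def_field]
    field_simp
  have L := HasDerivAt.lhopital_zero_nhdsNE
    (hφd.filter_mono nhdsWithin_le_nhds)
    (Eventually.of_forall fun y => hψd y : ∀ᶠ y in 𝓝[≠] x₀, _)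
    hne hφt hψt hdiv
  have o₁ : (fun y => f y - f x₀ - f' x₀ * (y - x₀) - d2 / 2 * (y - x₀) ^ 2)
      =o[𝓝[≠] x₀] fun y => (y - x₀) ^ 2 := by
    refine (isLittleO_iff_tendsto' ?_).mpr L
    filter_upwards [self_mem_nhdsWithin] with y hy h
    exact absurd h (pow_ne_zero 2 (sub_ne_zero.mpr hy))
  have o₂ : (fun y => f y - f x₀ - f' x₀ * (y - x₀) - d2 / 2 * (y - x₀) ^ 2)
      =o[pure x₀] fun y => (y - x₀) ^ 2 := isLittleO_pure.mpr hφ0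
  have o₃ := o₁.sup o₂
  rwa [nhdsNE_sup_pure] at o₃

/-- Composition: second order expansion of `f ∘ u`. -/
lemma Ex_comp {f f' u : ℝ → ℝ} {x u₁ u₂ d2 : ℝ}
    (hf : ∀ᶠ y in 𝓝 x, HasDerivAt f (f' y) y) (hf' : HasDerivAt f' d2 x)
    (hu : Ex u x u₁ u₂) :
    Ex (fun ε => f (u ε)) (f x) (f' x * u₁) (f' x * u₂ + d2 / 2 * u₁ ^ 2) := by
  have hut : Tendsto u (𝓝 0) (𝓝 x) := hu.tendsto
  have comp := (taylor2 hf hf').comp_tendsto hut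
  have hd : Ex (fun ε => u ε - x) 0 u₁ u₂ := by
    unfold Ex at hu ⊢
    exact hu.congr' (Eventually.of_forall fun ε => by ring) EventuallyEq.rfl
  have heO : (fun ε : ℝ => ε) =O[𝓝 (0:ℝ)] (fun _ => (1:ℝ)) :=
    (Filter.tendsto_id (α := ℝ)).isBigO_one ℝ
  have hdO : (fun ε => u ε - x) =O[𝓝 (0:ℝ)] fun ε => ε := by
    have h1 : (fun ε : ℝ => u ε - x - (0 + u₁ * ε + u₂ * ε ^ 2)) =O[𝓝 (0:ℝ)]
        fun ε => ε := by
      have hsq : (fun ε : ℝ => ε ^ 2) =O[𝓝 (0:ℝ)] fun ε => ε := by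
        have h := (isBigO_refl (fun ε : ℝ => ε) (𝓝 (0:ℝ))).mul heO
        exact h.congr' (Eventually.of_forall fun ε => by ring)
          (Eventually.of_forall fun ε => by ring)
      exact hd.isBigO.trans hsq
    have h2 : (fun ε : ℝ => 0 + u₁ * ε + u₂ * ε ^ 2) =O[𝓝 (0:ℝ)] fun ε => ε := by
      have hb : (fun ε : ℝ => u₁ + u₂ * ε) =O[𝓝 (0:ℝ)] (fun _ => (1:ℝ)) := by
        have hc : Continuous fun ε : ℝ => u₁ + u₂ * ε := by continuity
        exact (hc.tendsto 0).isBigO_one ℝ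
      have h := (isBigO_refl (fun ε : ℝ => ε) (𝓝 (0:ℝ))).mul hb
      exact h.congr' (Eventually.of_forall fun ε => by ring)
        (Eventually.of_forall fun ε => by ring)
    have h := h1.add h2
    exact h.congr' (Eventually.of_forall fun ε => by ring) EventuallyEq.rfl
  have sqO : (fun ε => (u ε - x) ^ 2) =O[𝓝 (0:ℝ)] fun ε => ε ^ 2 := by
    have h := hdO.mul hdO
    exact h.congr' (Eventually.of_forall fun ε => by ring)
      (Eventually.of_forall fun ε => by ring)
  have comp' : (fun ε => f (u ε) - f x - f' x * (u ε - x) - d2 / 2 * (u ε - x) ^ 2)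
      =o[𝓝 (0:ℝ)] fun ε => ε ^ 2 := comp.trans_isBigO sqO
  have hb : Ex (fun ε => f x + f' x * (u ε - x) + d2 / 2 * ((u ε - x) * (u ε - x)))
      _ _ _ := ((Ex_const (f x)).add (hd.const_mul (f' x))).add ((hd.mul hd).const_mul (d2 / 2))
  refine (Ex_of_sub ?_ hb).congr_c (by ring) (by ring) (by ring)
  exact comp'.congr' (Eventually.of_forall fun ε => by ring) EventuallyEq.rfl

/-- Expansion of `(1+ε)^a`. -/
lemma Ex_rpow (a : ℝ) : Ex (fun ε : ℝ => (1 + ε) ^ a) 1 a (a * (a - 1) / 2) := by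
  have hu : Ex (fun ε : ℝ => 1 + ε) 1 1 0 := Ex_rem fun ε => by ring
  have hfd : ∀ᶠ y in 𝓝 (1:ℝ), HasDerivAt (fun y : ℝ => y ^ a)
      ((fun y : ℝ => a * y ^ (a - 1)) y) y := by
    filter_upwards [eventually_ne_nhds (one_ne_zero (α := ℝ))] with y hy
    exact Real.hasDerivAt_rpow_const (Or.inl hy)
  have hfd' : HasDerivAt (fun y : ℝ => a * y ^ (a - 1)) (a * (a - 1)) 1 := by
    have h := (Real.hasDerivAt_rpow_const (x := (1:ℝ)) (p := a - 1)
      (Or.inl one_ne_zero)).const_mul a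
    rw [Real.one_rpow] at h
    refine h.congr_deriv ?_
    ring
  have h := Ex_comp hfd hfd' hu
  simp only [Real.one_rpow] at h
  exact h.congr_c (by ring) (by ring) (by ring)


/-- with `q = 1+ε` and `E = -2(t₁+t₂) - εC₁ + ε²(B-C₂)`, the left-hand
side of the q-Heun equation expands as `ε² · (Fuchsian second-order expression) + o(ε²)`
as `ε → 0`; in particular the coefficients of `ε⁰` and `ε¹` vanish. -/
theorem stmt10 (h₁ h₂ l₁ l₂ α₁ α₂ β t₁ t₂ B x C₁ C₂ ll : ℝ)
    (hC₁ : C₁ = (α₁ + α₂) * (t₁ + t₂) + (l₁ + h₁) * t₁ + (l₂ + h₂) * t₂)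
    (hC₂ : C₂ = t₁ / 2 * (h₁ ^ 2 + (α₁ + α₂ + l₁ - 1) ^ 2 - 1/2)
        + t₂ / 2 * (h₂ ^ 2 + (α₁ + α₂ + l₂ - 1) ^ 2 - 1/2))
    (hll : ll = l₁ + l₂ + α₁ + α₂ - h₁ - h₂)
    (g : ℝ → ℝ) (hg : ContDiff ℝ 3 g) :
    (fun ε : ℝ =>
      ((x - (1 + ε) ^ (h₁ + 1/2) * t₁) * (x - (1 + ε) ^ (h₂ + 1/2) * t₂) * g (x / (1 + ε))
        + (1 + ε) ^ (α₁ + α₂) * (x - (1 + ε) ^ (l₁ - 1/2) * t₁)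
            * (x - (1 + ε) ^ (l₂ - 1/2) * t₂) * g ((1 + ε) * x)
        - (((1 + ε) ^ α₁ + (1 + ε) ^ α₂) * x ^ 2
            + (-2 * (t₁ + t₂) - ε * C₁ + ε ^ 2 * (B - C₂)) * x
            + (1 + ε) ^ ((h₁ + h₂ + l₁ + l₂ + α₁ + α₂) / 2)
                * ((1 + ε) ^ (β / 2) + (1 + ε) ^ (-β / 2)) * t₁ * t₂) * g x)
      - ε ^ 2 *
        (x ^ 2 * (x - t₁) * (x - t₂) * deriv (deriv g) x
          + ((1 + h₂ - l₂) * x * (x - t₁) + (1 + h₁ - l₁) * x * (x - t₂)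
              + (ll - 1) * (x - t₁) * (x - t₂)) * x * deriv g x
          + (α₁ * α₂ * x ^ 2 - B * x
              + t₁ * t₂ * (ll / 2 - 1 + β / 2) * (ll / 2 - 1 - β / 2)) * g x))
      =o[nhds (0 : ℝ)] fun ε : ℝ => ε ^ 2 := by
  have hgd : ∀ y : ℝ, HasDerivAt g (deriv g y) y := fun y =>
    ((hg.differentiable (by norm_num)) y).hasDerivAt
  have hg2 : ContDiff ℝ 2 (deriv g) := by
    have h3 : ContDiff ℝ (2 + 1 : ℕ) g := by exact_mod_cast hg
    exact (contDiff_succ_iff_deriv.mp (by exact_mod_cast h3)).2.2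
  have hgd2 : ∀ y : ℝ, HasDerivAt (deriv g) (deriv (deriv g) y) y := fun y =>
    ((hg2.differentiable (by norm_num)) y).hasDerivAt
  have hu1 : Ex (fun ε : ℝ => (1 + ε) * x) x x 0 := Ex_rem fun ε => by ring
  have hu2 : Ex (fun ε : ℝ => x / (1 + ε)) x (-x) x := by
    unfold Ex
    have hto : Tendsto (fun ε : ℝ => 1 + ε) (𝓝 0) (𝓝 1) := by
      have hc : Continuous fun ε : ℝ => 1 + ε := by continuity
      have h := hc.tendsto 0
      norm_num at h
      exact h
    have hne : ∀ᶠ ε in 𝓝 (0:ℝ), 1 + ε ≠ 0 := hto.eventually_ne one_ne_zero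
    have hq : Tendsto (fun ε : ℝ => -x * ε / (1 + ε)) (𝓝 0) (𝓝 0) := by
      have h1 : Tendsto (fun ε : ℝ => -x * ε) (𝓝 0) (𝓝 0) := by
        have hc : Continuous fun ε : ℝ => -x * ε := by continuity
        have h := hc.tendsto 0
        convert h using 2
        ring
      have h2 := hto.inv₀ one_ne_zero
      have h3 : Tendsto (fun ε : ℝ => -x * ε * (1 + ε)⁻¹) (𝓝 0) (𝓝 0) := by
        have h := h1.mul h2
        convert h using 2
        norm_num
      exact h3.congr fun ε => (div_eq_mul_inv (-x * ε) (1 + ε)).symm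
    have ho := (isBigO_refl (fun ε : ℝ => ε ^ 2) (𝓝 (0:ℝ))).mul_isLittleO
      ((isLittleO_one_iff ℝ).mpr hq)
    refine ho.congr' ?_ (Eventually.of_forall fun ε => by beta_reduce; ring)
    filter_upwards [hne] with ε h
    field_simp
    ring
  have EG1 := Ex_comp (Eventually.of_forall hgd) (hgd2 x) hu1
  have EG2 := Ex_comp (Eventually.of_forall hgd) (hgd2 x) hu2
  have A1 := Ex_rpow (h₁ + 1/2)
  have A2 := Ex_rpow (h₂ + 1/2)
  have A3 := Ex_rpow (α₁ + α₂)
  have A4 := Ex_rpow (l₁ - 1/2)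
  have A5 := Ex_rpow (l₂ - 1/2)
  have A6 := Ex_rpow α₁
  have A7 := Ex_rpow α₂
  have A8 := Ex_rpow ((h₁ + h₂ + l₁ + l₂ + α₁ + α₂) / 2)
  have A9 := Ex_rpow (β / 2)
  have A10 := Ex_rpow (-β / 2)
  have B1 := (A1.mul_const t₁).const_sub x
  have B2 := (A2.mul_const t₂).const_sub x
  have B4 := (A4.mul_const t₁).const_sub x
  have B5 := (A5.mul_const t₂).const_sub x
  have EE : Ex (fun ε : ℝ => -2 * (t₁ + t₂) - ε * C₁ + ε ^ 2 * (B - C₂))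
      (-2 * (t₁ + t₂)) (-C₁) (B - C₂) := Ex_rem fun ε => by ring
  have T1 := (B1.mul B2).mul EG2
  have T2 := ((A3.mul B4).mul B5).mul EG1
  have SA := (A6.add A7).mul_const (x ^ 2)
  have S := (SA.add (EE.mul_const x)).add
    (((A8.mul (A9.add A10)).mul_const t₁).mul_const t₂)
  have T3 := S.mul_const (g x)
  have LHSex := (T1.add T2).sub T3
  unfold Ex at LHSex
  refine LHSex.congr' (Eventually.of_forall fun ε => ?_) EventuallyEq.rfl
  rw [hC₁, hC₂, hll]
  ring
end

section
/- Suppose p(E) = Σ_{j=0}^{M} a_j(q)E^j is a family of real polynomials in E parametrized by q ∈ (0,1), with a_j(q) ~ c_j q^{μ_j} as q → +0 for nonzero reals c_j, and suppose the leading term factors as Σ c_j q^{μ_j}E^j = C q^{ν} ∏_{k=1}^{M}(E + d_k q^{ρ_k}) with d_k > 0 and ρ₁ > ρ₂ > ⋯ > ρ_M. Then for sufficiently small q > 0, p(E) has M distinct real roots E_1(q) < ⋯ < E_M(q), and E_k(q) ~ -d_{M+1-k} q^{ρ_{M+1-k}} as q → +0. -/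
open Filter Set
open Polynomial

lemma stmt14_coeff_mul_nonneg {p q : ℝ[X]} (hp : ∀ i, 0 ≤ p.coeff i)
    (hq : ∀ i, 0 ≤ q.coeff i) : ∀ i, 0 ≤ (p * q).coeff i := by
  intro i
  rw [coeff_mul]
  exact Finset.sum_nonneg fun x _ => mul_nonneg (hp _) (hq _)

lemma stmt14_coeff_prod_nonneg (s : Finset ℕ) (r : ℕ → ℝ) (hr : ∀ k ∈ s, 0 ≤ r k) :
    ∀ i, 0 ≤ (∏ k ∈ s, (X + C (r k))).coeff i := by
  classical
  induction s using Finset.induction with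
  | empty => intro i; rw [Finset.prod_empty, coeff_one]; split <;> norm_num
  | @insert a s ha ih =>
      rw [Finset.prod_insert ha]
      refine stmt14_coeff_mul_nonneg (fun i => ?_) (ih fun k hk => hr k (Finset.mem_insert_of_mem hk))
      rw [coeff_add, coeff_X, coeff_C]
      have h0 : 0 ≤ r a := hr a (Finset.mem_insert_self a s)
      split <;> split <;> norm_num <;> linarith

set_option maxHeartbeats 1000000 in
/-- key sign/IVT lemma at a fixed parameter value. -/
lemma stmt14_key (M : ℕ) (aq cq : ℕ → ℝ) (Cq : ℝ) (rr : ℕ → ℝ)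
    (hcM : cq M ≠ 0)
    (hrr : ∀ k, 1 ≤ k → k ≤ M → 0 < rr k)
    (hfactq : ∀ E : ℝ, ∑ j ∈ Finset.range (M+1), cq j * E ^ j
        = Cq * ∏ k ∈ Finset.Icc 1 M, (E + rr k))
    (hsep : ∀ j k, 1 ≤ j → j < k → k ≤ M → 10 * rr j ≤ rr k)
    (ε : ℝ) (hε0 : 0 < ε) (hε1 : ε ≤ 1/2)
    (hclose : ∀ j ≤ M, |aq j - cq j| ≤ ε / 2^(M+1) * |cq j|)
    (k : ℕ) (hk1 : 1 ≤ k) (hkM : k ≤ M) :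
    ∃ E ∈ Ioo (-(1+ε) * rr k) (-(1-ε) * rr k),
      ∑ j ∈ Finset.range (M+1), aq j * E ^ j = 0 := by
  classical
  set s : Finset ℕ := Finset.Icc 1 M with hs
  have hks : k ∈ s := Finset.mem_Icc.2 ⟨hk1, hkM⟩
  set Q : ℝ[X] := ∏ j ∈ s, (X + C (rr j)) with hQ
  have hrr' : ∀ j ∈ s, 0 < rr j := fun j hj => by
    rcases Finset.mem_Icc.1 hj with ⟨h1, h2⟩; exact hrr j h1 h2
  have hb : ∀ i, 0 ≤ Q.coeff i :=
    stmt14_coeff_prod_nonneg s rr (fun j hj => (hrr' j hj).le)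
  have hQmonic : Q.Monic := monic_prod_of_monic _ _ (fun j _ => monic_X_add_C _)
  have hcard : s.card = M := by rw [hs, Nat.card_Icc]; omega
  have hQdeg : Q.natDegree = M := by
    rw [hQ, natDegree_prod_of_monic _ _ (fun j _ => monic_X_add_C _)]
    simp [natDegree_X_add_C, hcard]
  have hQevalx : ∀ x : ℝ, Q.eval x = ∏ j ∈ s, (x + rr j) := by
    intro x; rw [hQ, eval_prod]; simp
  have hpoly : (∑ j ∈ Finset.range (M+1), C (cq j) * X ^ j) = C Cq * Q := by
    apply Polynomial.funext
    intro E
    rw [eval_finset_sum]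
    simp only [eval_mul, eval_C, eval_pow, eval_X]
    rw [hfactq E, hQevalx E]
  have hcoeff : ∀ j, j ≤ M → cq j = Cq * Q.coeff j := by
    intro j hj
    have h := congrArg (fun P : ℝ[X] => P.coeff j) hpoly
    simp only [finset_sum_coeff, coeff_C_mul, coeff_X_pow, mul_ite, mul_one, mul_zero] at h
    rwa [Finset.sum_ite_eq (Finset.range (M+1)) j cq, if_pos (Finset.mem_range.2 (by omega))] at h
  have hQM : Q.coeff M = 1 := by
    have := hQmonic.coeff_natDegree
    rwa [hQdeg] at this
  have hCq : Cq ≠ 0 := by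
    intro h
    apply hcM
    rw [hcoeff M le_rfl, h, zero_mul]
  have habs : ∀ j, j ≤ M → |cq j| = |Cq| * Q.coeff j := by
    intro j hj
    rw [hcoeff j hj, abs_mul, abs_of_nonneg (hb j)]
  have hQeval : ∀ x : ℝ, Q.eval x = ∑ j ∈ Finset.range (M+1), Q.coeff j * x^j := by
    intro x
    exact eval_eq_sum_range' (by omega : Q.natDegree < M + 1) x
  set θ : ℝ := ε / 2^(M+1) with hθ
  have hθ0 : 0 < θ := by positivity
  -- the uniform bound
  have hbound : ∀ E : ℝ,
      |(∑ j ∈ Finset.range (M+1), aq j * E ^ j) - Cq * ∏ j ∈ s, (E + rr j)|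
        ≤ θ * (|Cq| * ∏ j ∈ s, (|E| + rr j)) := by
    intro E
    have h1 : (∑ j ∈ Finset.range (M+1), aq j * E ^ j) - Cq * ∏ j ∈ s, (E + rr j)
        = ∑ j ∈ Finset.range (M+1), (aq j - cq j) * E ^ j := by
      rw [← hfactq E, ← Finset.sum_sub_distrib]
      congr 1; ext j; ring
    rw [h1]
    calc |∑ j ∈ Finset.range (M+1), (aq j - cq j) * E ^ j|
        ≤ ∑ j ∈ Finset.range (M+1), |aq j - cq j| * |E| ^ j := by
          refine (Finset.abs_sum_le_sum_abs _ _).trans ?_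
          refine Finset.sum_le_sum fun j _ => ?_
          rw [abs_mul, abs_pow]
      _ ≤ ∑ j ∈ Finset.range (M+1), θ * (|Cq| * Q.coeff j) * |E| ^ j := by
          refine Finset.sum_le_sum fun j hj => ?_
          have hjM : j ≤ M := Nat.lt_succ_iff.1 (Finset.mem_range.1 hj)
          have := hclose j hjM
          rw [habs j hjM] at this
          exact mul_le_mul_of_nonneg_right this (by positivity)
      _ = θ * (|Cq| * ∑ j ∈ Finset.range (M+1), Q.coeff j * |E| ^ j) := by
          rw [Finset.mul_sum, Finset.mul_sum]; congr 1; ext j; ring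
      _ = θ * (|Cq| * ∏ j ∈ s, (|E| + rr j)) := by
          rw [← hQeval, hQevalx]
  -- test point analysis
  have hrrk : 0 < rr k := hrr k hk1 hkM
  have hL : ∀ t : ℝ, 1/2 ≤ t → t ≤ 3/2 → ε ≤ |1 - t| →
      θ * (|Cq| * ∏ j ∈ s, (|(-t * rr k)| + rr j)) < |Cq * ∏ j ∈ s, (-t * rr k + rr j)| := by
    intro t ht1 ht2 htε
    have ht0 : 0 < t := by linarith
    have habs0 : ∀ j ∈ s, |(-t * rr k)| + rr j = rr j + t * rr k := by
      intro j hj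
      rw [show (-t * rr k) = -(t * rr k) by ring, abs_neg,
        abs_of_pos (mul_pos ht0 hrrk)]
      ring
    have hgn : ∀ j ∈ s, 0 ≤ (if j = k then ε/3 else 1/2) * (rr j + t * rr k) := by
      intro j hj
      have := hrr' j hj
      have h1 : (0:ℝ) ≤ (if j = k then ε/3 else 1/2) := by split <;> linarith
      have h2 : (0:ℝ) ≤ rr j + t * rr k := by nlinarith
      exact mul_nonneg h1 h2
    have hfg : ∀ j ∈ s,
        (if j = k then ε/3 else 1/2) * (rr j + t * rr k) ≤ |(-t * rr k + rr j)| := by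
      intro j hj
      have hrj := hrr' j hj
      rcases Finset.mem_Icc.1 hj with ⟨hj1, hjM⟩
      rw [show (-t * rr k + rr j) = rr j - t * rr k by ring]
      by_cases hjk : j = k
      · subst hjk
        rw [if_pos rfl, show rr j - t * rr j = (1 - t) * rr j by ring, abs_mul,
          abs_of_pos hrj]
        nlinarith [mul_le_mul_of_nonneg_right htε hrj.le,
          mul_nonneg (mul_nonneg hε0.le hrj.le) (by linarith : (0:ℝ) ≤ 2 - t)]
      · rw [if_neg hjk]
        rcases lt_or_gt_of_ne hjk with h | h
        · have hsep' := hsep j k hj1 h hkM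
          have h1 : rr j - t * rr k ≤ 0 := by nlinarith
          rw [abs_of_nonpos h1]
          nlinarith
        · have hsep' := hsep k j hk1 h hjM
          have h1 : 0 ≤ rr j - t * rr k := by nlinarith
          rw [abs_of_nonneg h1]
          nlinarith
    have hprod1 : ∏ j ∈ s, ((if j = k then ε/3 else 1/2) * (rr j + t * rr k))
        ≤ ∏ j ∈ s, |(-t * rr k + rr j)| :=
      Finset.prod_le_prod hgn hfg
    have hprod2 : ∏ j ∈ s, ((if j = k then ε/3 else 1/2) * (rr j + t * rr k))
        = (ε/3) * (1/2:ℝ)^(M-1) * ∏ j ∈ s, (rr j + t * rr k) := by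
      rw [Finset.prod_mul_distrib]
      congr 1
      rw [← Finset.mul_prod_erase s _ hks, if_pos rfl]
      congr 1
      rw [Finset.prod_congr rfl (fun j hj => if_neg (Finset.ne_of_mem_erase hj)),
        Finset.prod_const, Finset.card_erase_of_mem hks, hcard]
    have hBpos : 0 < ∏ j ∈ s, (rr j + t * rr k) :=
      Finset.prod_pos fun j hj => by nlinarith [hrr' j hj]
    have hθlt : θ < (ε/3) * (1/2:ℝ)^(M-1) := by
      rw [hθ, div_pow, one_pow, div_mul_div_comm, mul_one]
      have h2 : (2:ℝ)^(M+1) = 4 * 2^(M-1) := by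
        rw [show M + 1 = (M-1) + 2 by omega, pow_add]; ring
      rw [h2]
      exact div_lt_div_of_pos_left hε0 (by positivity) (by nlinarith [pow_pos (by norm_num : (0:ℝ) < 2) (M-1)])
    have hBeq : ∏ j ∈ s, (|(-t * rr k)| + rr j) = ∏ j ∈ s, (rr j + t * rr k) :=
      Finset.prod_congr rfl habs0
    rw [hBeq, abs_mul, Finset.abs_prod]
    have hCqpos : 0 < |Cq| := abs_pos.2 hCq
    have hstep := mul_lt_mul_of_pos_right hθlt hBpos
    calc θ * (|Cq| * ∏ j ∈ s, (rr j + t * rr k))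
        = (θ * ∏ j ∈ s, (rr j + t * rr k)) * |Cq| := by ring
      _ < ((ε/3) * (1/2:ℝ)^(M-1) * ∏ j ∈ s, (rr j + t * rr k)) * |Cq| :=
          mul_lt_mul_of_pos_right hstep hCqpos
      _ ≤ (∏ j ∈ s, |(-t * rr k + rr j)|) * |Cq| := by
          rw [← hprod2]
          exact mul_le_mul_of_nonneg_right hprod1 hCqpos.le
      _ = |Cq| * ∏ j ∈ s, |(-t * rr k + rr j)| := by ring
  have hsame : ∀ t : ℝ, 1/2 ≤ t → t ≤ 3/2 → ε ≤ |1 - t| →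
      0 < (∑ j ∈ Finset.range (M+1), aq j * (-t * rr k) ^ j)
          * (Cq * ∏ j ∈ s, (-t * rr k + rr j)) := by
    intro t ht1 ht2 htε
    set pv : ℝ := ∑ j ∈ Finset.range (M+1), aq j * (-t * rr k) ^ j with hpv
    set Lv : ℝ := Cq * ∏ j ∈ s, (-t * rr k + rr j) with hLv
    have h1 : |pv - Lv| < |Lv| := by
      calc |pv - Lv|
          ≤ θ * (|Cq| * ∏ j ∈ s, (|(-t * rr k)| + rr j)) := hbound (-t * rr k)
        _ < |Lv| := hL t ht1 ht2 htε
    rcases lt_trichotomy Lv 0 with hL0 | hL0 | hL0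
    · rw [abs_of_neg hL0] at h1
      have h2 := abs_lt.1 h1
      have hp0 : pv < 0 := by linarith [h2.1, h2.2]
      exact mul_pos_of_neg_of_neg hp0 hL0
    · rw [hL0, abs_zero] at h1
      exact absurd h1 (by simp [abs_nonneg])
    · rw [abs_of_pos hL0] at h1
      have h2 := abs_lt.1 h1
      have hp0 : 0 < pv := by linarith [h2.1, h2.2]
      exact mul_pos hp0 hL0
  have habs1 : ε ≤ |1 - (1+ε)| := by
    rw [show (1:ℝ) - (1+ε) = -ε by ring, abs_neg, abs_of_pos hε0]
  have habs2 : ε ≤ |1 - (1-ε)| := by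
    rw [show (1:ℝ) - (1-ε) = ε by ring, abs_of_pos hε0]
  have hs1 := hsame (1+ε) (by linarith) (by linarith) habs1

  have hs2 := hsame (1-ε) (by linarith) (by linarith) habs2
  have hLL : (Cq * ∏ j ∈ s, (-(1+ε) * rr k + rr j))
      * (Cq * ∏ j ∈ s, (-(1-ε) * rr k + rr j)) < 0 := by
    have hprodeq : (Cq * ∏ j ∈ s, (-(1+ε) * rr k + rr j))
        * (Cq * ∏ j ∈ s, (-(1-ε) * rr k + rr j))
        = Cq^2 * ∏ j ∈ s, ((-(1+ε) * rr k + rr j) * (-(1-ε) * rr k + rr j)) := by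
      rw [Finset.prod_mul_distrib]; ring
    rw [hprodeq]
    have hk0 : (-(1+ε) * rr k + rr k) * (-(1-ε) * rr k + rr k) < 0 := by
      nlinarith [mul_pos (mul_pos hε0 hrrk) (mul_pos hε0 hrrk)]
    have herase : 0 < ∏ j ∈ s.erase k, ((-(1+ε) * rr k + rr j) * (-(1-ε) * rr k + rr j)) := by
      refine Finset.prod_pos fun j hj => ?_
      have hjk : j ≠ k := Finset.ne_of_mem_erase hj
      have hjs : j ∈ s := Finset.mem_of_mem_erase hj
      have hrj := hrr' j hjs
      rcases Finset.mem_Icc.1 hjs with ⟨hj1, hjM⟩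
      rcases lt_or_gt_of_ne hjk with h | h
      · have hsep' := hsep j k hj1 h hkM
        have h1 : -(1+ε) * rr k + rr j < 0 := by nlinarith
        have h2 : -(1-ε) * rr k + rr j < 0 := by nlinarith
        exact mul_pos_of_neg_of_neg h1 h2
      · have hsep' := hsep k j hk1 h hjM
        have h1 : 0 < -(1+ε) * rr k + rr j := by nlinarith
        have h2 : 0 < -(1-ε) * rr k + rr j := by nlinarith
        exact mul_pos h1 h2
    have hprodneg : ∏ j ∈ s, ((-(1+ε) * rr k + rr j) * (-(1-ε) * rr k + rr j)) < 0 := by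
      rw [← Finset.mul_prod_erase s _ hks]
      exact mul_neg_of_neg_of_pos hk0 herase
    have hCq2 : 0 < Cq^2 := pow_two_pos_of_ne_zero hCq
    exact mul_neg_of_pos_of_neg hCq2 hprodneg
  set P1 : ℝ := ∑ j ∈ Finset.range (M+1), aq j * (-(1+ε) * rr k) ^ j with hP1
  set P2 : ℝ := ∑ j ∈ Finset.range (M+1), aq j * (-(1-ε) * rr k) ^ j with hP2
  set L1 : ℝ := Cq * ∏ j ∈ s, (-(1+ε) * rr k + rr j) with hL1
  set L2 : ℝ := Cq * ∏ j ∈ s, (-(1-ε) * rr k + rr j) with hL2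
  have hpp : P1 * P2 < 0 := by
    by_contra hcon
    push_neg at hcon
    have h := mul_pos hs1 hs2
    rw [show P1 * L1 * (P2 * L2) = (P1 * P2) * (L1 * L2) by ring] at h
    have h2 : (P1 * P2) * (L1 * L2) ≤ 0 := mul_nonpos_of_nonneg_of_nonpos hcon hLL.le
    linarith
  have hE12 : -(1+ε) * rr k < -(1-ε) * rr k := by nlinarith
  have hcont : ContinuousOn (fun E : ℝ => ∑ j ∈ Finset.range (M+1), aq j * E ^ j)
      (Icc (-(1+ε) * rr k) (-(1-ε) * rr k)) :=
    (continuous_finset_sum _ fun j _ => continuous_const.mul (continuous_pow j)).continuousOn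
  rcases mul_neg_iff.1 hpp with ⟨h1, h2⟩ | ⟨h1, h2⟩
  · obtain ⟨E, hE, hpE⟩ := intermediate_value_Ioo' hE12.le hcont ⟨h2, h1⟩
    exact ⟨E, hE, hpE⟩
  · obtain ⟨E, hE, hpE⟩ := intermediate_value_Ioo hE12.le hcont ⟨h1, h2⟩
    exact ⟨E, hE, hpE⟩


/-- the ultradiscrete-limit principle: if the leading term of a family of
real polynomials factors into linear factors `C q^ν ∏ (E + d_k q^{ρ_k})` with `d_k > 0`
and strictly decreasing exponents `ρ_k`, then for small `q > 0` the polynomial has `M`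
distinct real roots `E_1(q) < ⋯ < E_M(q)` with `E_k(q) ~ -d_{M+1-k} q^{ρ_{M+1-k}}`. -/
theorem stmt14 (M : ℕ) (hM : 0 < M)
    (a : ℕ → ℝ → ℝ) (c : ℕ → ℝ) (μ : ℕ → ℝ) (Cc ν : ℝ) (d ρ : ℕ → ℝ)
    (hc : ∀ j ≤ M, c j ≠ 0)
    (ha : ∀ j ≤ M, Tendsto (fun q : ℝ => a j q / (c j * q ^ μ j))
        (nhdsWithin 0 (Ioi 0)) (nhds 1))
    (hd : ∀ k, 1 ≤ k → k ≤ M → 0 < d k)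
    (hρ : ∀ k l, 1 ≤ k → k < l → l ≤ M → ρ l < ρ k)
    (hfact : ∀ q ∈ Ioo (0 : ℝ) 1, ∀ E : ℝ,
      ∑ j ∈ Finset.range (M + 1), c j * q ^ μ j * E ^ j
        = Cc * q ^ ν * ∏ k ∈ Finset.Icc 1 M, (E + d k * q ^ ρ k)) :
    ∃ q₀ ∈ Ioo (0 : ℝ) 1, ∃ Er : ℕ → ℝ → ℝ,
      (∀ q ∈ Ioo (0 : ℝ) q₀,
        (∀ k, 1 ≤ k → k ≤ M → ∑ j ∈ Finset.range (M + 1), a j q * Er k q ^ j = 0)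
        ∧ (∀ k l, 1 ≤ k → k < l → l ≤ M → Er k q < Er l q)
        ∧ (∀ E : ℝ, (∑ j ∈ Finset.range (M + 1), a j q * E ^ j) = 0 →
            ∃ k, 1 ≤ k ∧ k ≤ M ∧ E = Er k q))
      ∧ ∀ k, 1 ≤ k → k ≤ M →
          Tendsto (fun q : ℝ => Er k q / (-d (M + 1 - k) * q ^ ρ (M + 1 - k)))
            (nhdsWithin 0 (Ioi 0)) (nhds 1) := by
  classical
  set l : Filter ℝ := nhdsWithin 0 (Ioi 0) with hldef
  -- eventual separation of root scales
  have hsep_pair : ∀ j k : ℕ, 1 ≤ j → j < k → k ≤ M →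
      ∀ᶠ q in l, 10 * (d j * q ^ ρ j) ≤ d k * q ^ ρ k := by
    intro j k hj1 hjk hkM
    have hdj : 0 < d j := hd j hj1 (by omega)
    have hdk : 0 < d k := hd k (by omega) hkM
    have he : 0 < ρ j - ρ k := by have := hρ j k hj1 hjk hkM; linarith
    have hcont : Tendsto (fun q : ℝ => q ^ (ρ j - ρ k)) (nhds 0) (nhds 0) := by
      have h1 := (Real.continuousAt_rpow_const 0 (ρ j - ρ k) (Or.inr he.le)).tendsto
      rwa [Real.zero_rpow he.ne'] at h1
    have h0 : Tendsto (fun q : ℝ => q ^ (ρ j - ρ k)) l (nhds 0) :=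
      hcont.mono_left nhdsWithin_le_nhds
    have hb : (0:ℝ) < d k / (10 * d j) := by positivity
    have hev : ∀ᶠ q in l, q ^ (ρ j - ρ k) < d k / (10 * d j) :=
      h0.eventually (gt_mem_nhds hb)
    filter_upwards [hev, eventually_mem_nhdsWithin] with q h1q h2q
    have hq0 : (0:ℝ) < q := h2q
    have hq2 : 0 < q ^ ρ k := Real.rpow_pos_of_pos hq0 _
    have h3 : q ^ (ρ j - ρ k) * (10 * d j) < d k :=
      (lt_div_iff₀ (by positivity)).1 h1q
    have hsplit : q ^ ρ j = q ^ (ρ j - ρ k) * q ^ ρ k := by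
      rw [← Real.rpow_add hq0]; congr 1; ring
    have h4 := mul_lt_mul_of_pos_right h3 hq2
    calc 10 * (d j * q ^ ρ j) = q ^ (ρ j - ρ k) * (10 * d j) * q ^ ρ k := by
          rw [hsplit]; ring
      _ ≤ d k * q ^ ρ k := h4.le
  have hsep_ev : ∀ᶠ q in l, ∀ j k : ℕ, 1 ≤ j → j < k → k ≤ M →
      10 * (d j * q ^ ρ j) ≤ d k * q ^ ρ k := by
    have h1 : ∀ᶠ q in l, ∀ p ∈ Finset.Icc 1 M ×ˢ Finset.Icc 1 M,
        (1 ≤ p.1 → p.1 < p.2 → p.2 ≤ M → 10 * (d p.1 * q ^ ρ p.1) ≤ d p.2 * q ^ ρ p.2) := by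
      rw [Finset.eventually_all]
      rintro ⟨j, k⟩ _
      by_cases hcond : 1 ≤ j ∧ j < k ∧ k ≤ M
      · filter_upwards [hsep_pair j k hcond.1 hcond.2.1 hcond.2.2] with q hq
        intro _ _ _; exact hq
      · exact Filter.Eventually.of_forall fun q h1 h2 h3 => absurd ⟨h1, h2, h3⟩ hcond
    filter_upwards [h1] with q hq
    intro j k hj1 hjk hkM
    exact hq (j, k) (Finset.mem_product.2 ⟨Finset.mem_Icc.2 ⟨hj1, by omega⟩,
      Finset.mem_Icc.2 ⟨by omega, hkM⟩⟩) hj1 hjk hkM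
  -- eventual closeness of coefficients
  have hclose_ev : ∀ ε : ℝ, 0 < ε → ∀ᶠ q in l, ∀ j ≤ M,
      |a j q - c j * q ^ μ j| ≤ ε / 2 ^ (M+1) * |c j * q ^ μ j| := by
    intro ε hε
    have hθ : (0:ℝ) < ε / 2 ^ (M+1) := by positivity
    have h1 : ∀ᶠ q in l, ∀ j ∈ Finset.range (M+1),
        |a j q - c j * q ^ μ j| ≤ ε / 2 ^ (M+1) * |c j * q ^ μ j| := by
      rw [Finset.eventually_all]
      intro j hj
      have hjM : j ≤ M := Nat.lt_succ_iff.1 (Finset.mem_range.1 hj)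
      have h2 : ∀ᶠ q in l, |a j q / (c j * q ^ μ j) - 1| < ε / 2 ^ (M+1) := by
        have := Metric.tendsto_nhds.1 (ha j hjM) _ hθ
        simpa [Real.dist_eq] using this
      filter_upwards [h2, eventually_mem_nhdsWithin] with q hq1 hq2
      have hq0 : (0:ℝ) < q := hq2
      have hcq : c j * q ^ μ j ≠ 0 :=
        mul_ne_zero (hc j hjM) (Real.rpow_pos_of_pos hq0 _).ne'
      have heq : a j q - c j * q ^ μ j
          = (a j q / (c j * q ^ μ j) - 1) * (c j * q ^ μ j) := by
        rw [sub_mul, div_mul_cancel₀ _ hcq, one_mul]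
      rw [heq, abs_mul]
      exact mul_le_mul_of_nonneg_right hq1.le (abs_nonneg _)
    filter_upwards [h1] with q hq
    intro j hjM
    exact hq j (Finset.mem_range.2 (by omega))
  have hIoo : ∀ᶠ q in l, q ∈ Ioo (0:ℝ) 1 :=
    Ioo_mem_nhdsGT_of_mem (by constructor <;> norm_num)
  -- extract q₀
  have hS := hIoo.and (hsep_ev.and (hclose_ev (1/2) one_half_pos))
  obtain ⟨u, hu, hsub⟩ := mem_nhdsGT_iff_exists_Ioo_subset.1 hS
  set q₀ : ℝ := min u 1 / 2 with hq₀def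
  have hq₀mem : q₀ ∈ Ioo (0:ℝ) 1 := by
    constructor
    · have : (0:ℝ) < min u 1 := lt_min hu one_pos
      linarith
    · have : min u 1 ≤ 1 := min_le_right _ _
      linarith
  have hgood : ∀ q ∈ Ioo (0:ℝ) q₀, q ∈ Ioo (0:ℝ) 1 ∧
      (∀ j k : ℕ, 1 ≤ j → j < k → k ≤ M → 10 * (d j * q ^ ρ j) ≤ d k * q ^ ρ k) ∧
      (∀ j ≤ M, |a j q - c j * q ^ μ j| ≤ (1/2) / 2 ^ (M+1) * |c j * q ^ μ j|) := by
    intro q hq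
    apply hsub
    constructor
    · exact hq.1
    · have h1 : q₀ ≤ u := by
        have h2 : min u 1 ≤ u := min_le_left _ _
        have : (0:ℝ) < min u 1 := lt_min hu one_pos
        rw [hq₀def]; linarith
      exact lt_of_lt_of_le hq.2 h1
  -- the root finder at each sufficiently small q
  have hroot : ∀ q ∈ Ioo (0:ℝ) 1,
      (∀ j k : ℕ, 1 ≤ j → j < k → k ≤ M → 10 * (d j * q ^ ρ j) ≤ d k * q ^ ρ k) →
      ∀ ε : ℝ, 0 < ε → ε ≤ 1/2 →
      (∀ j ≤ M, |a j q - c j * q ^ μ j| ≤ ε / 2 ^ (M+1) * |c j * q ^ μ j|) →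
      ∀ k, 1 ≤ k → k ≤ M →
      ∃ E ∈ Ioo (-(1+ε) * (d k * q ^ ρ k)) (-(1-ε) * (d k * q ^ ρ k)),
        ∑ j ∈ Finset.range (M+1), a j q * E ^ j = 0 := by
    intro q hq hsepq ε hε0 hε1 hcloseq k hk1 hkM
    exact stmt14_key M (fun j => a j q) (fun j => c j * q ^ μ j) (Cc * q ^ ν)
      (fun k => d k * q ^ ρ k)
      (mul_ne_zero (hc M le_rfl) (Real.rpow_pos_of_pos hq.1 _).ne')
      (fun k h1 h2 => mul_pos (hd k h1 h2) (Real.rpow_pos_of_pos hq.1 _))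
      (hfact q hq) hsepq ε hε0 hε1 hcloseq k hk1 hkM
  -- define the root functions
  set Er : ℕ → ℝ → ℝ := fun k q =>
    if h : ∃ E, E ∈ Ioo (-(1+(1/2:ℝ)) * (d (M+1-k) * q ^ ρ (M+1-k)))
        (-(1-(1/2:ℝ)) * (d (M+1-k) * q ^ ρ (M+1-k)))
        ∧ ∑ j ∈ Finset.range (M+1), a j q * E ^ j = 0
    then h.choose else 0 with hErdef
  have hEr : ∀ q ∈ Ioo (0:ℝ) q₀, ∀ k, 1 ≤ k → k ≤ M →
      Er k q ∈ Ioo (-(1+(1/2:ℝ)) * (d (M+1-k) * q ^ ρ (M+1-k)))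
        (-(1-(1/2:ℝ)) * (d (M+1-k) * q ^ ρ (M+1-k)))
      ∧ ∑ j ∈ Finset.range (M+1), a j q * Er k q ^ j = 0 := by
    intro q hq k hk1 hkM
    obtain ⟨hq1, hq2, hq3⟩ := hgood q hq
    have hK1 : 1 ≤ M+1-k := by omega
    have hKM : M+1-k ≤ M := by omega
    obtain ⟨E, hE1, hE2⟩ := hroot q hq1 hq2 (1/2) one_half_pos le_rfl hq3 (M+1-k) hK1 hKM
    have hex : ∃ E, E ∈ Ioo (-(1+(1/2:ℝ)) * (d (M+1-k) * q ^ ρ (M+1-k)))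
        (-(1-(1/2:ℝ)) * (d (M+1-k) * q ^ ρ (M+1-k)))
        ∧ ∑ j ∈ Finset.range (M+1), a j q * E ^ j = 0 := ⟨E, hE1, hE2⟩
    rw [hErdef]
    simp only [dif_pos hex]
    exact hex.choose_spec
  -- ordering
  have hord : ∀ q ∈ Ioo (0:ℝ) q₀, ∀ k kk, 1 ≤ k → k < kk → kk ≤ M →
      Er k q < Er kk q := by
    intro q hq k kk hk1 hkkk hkkM
    obtain ⟨hq1, hq2, hq3⟩ := hgood q hq
    have hK1 : 1 ≤ M+1-kk := by omega
    have h1 := hEr q hq k hk1 (by omega)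
    have h2 := hEr q hq kk (by omega) hkkM
    have hsepq := hq2 (M+1-kk) (M+1-k) hK1 (by omega) (by omega)
    have hpos : 0 < d (M+1-kk) * q ^ ρ (M+1-kk) :=
      mul_pos (hd _ hK1 (by omega)) (Real.rpow_pos_of_pos hq1.1 _)
    have hb1 := h1.1.2
    have hb2 := h2.1.1
    linarith
  -- completeness
  have hcomp : ∀ q ∈ Ioo (0:ℝ) q₀, ∀ E : ℝ,
      (∑ j ∈ Finset.range (M+1), a j q * E ^ j) = 0 →
      ∃ k, 1 ≤ k ∧ k ≤ M ∧ E = Er k q := by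
    intro q hq E hE
    obtain ⟨hq1, hq2, hq3⟩ := hgood q hq
    set P : ℝ[X] := ∑ j ∈ Finset.range (M+1), Polynomial.C (a j q) * Polynomial.X ^ j
      with hPdef
    have hPeval : ∀ x : ℝ, P.eval x = ∑ j ∈ Finset.range (M+1), a j q * x ^ j := by
      intro x
      rw [hPdef, eval_finset_sum]
      simp
    have hPcoeff : ∀ n, n ≤ M → P.coeff n = a n q := by
      intro n hn
      rw [hPdef, finset_sum_coeff]
      simp only [coeff_C_mul, coeff_X_pow, mul_ite, mul_one, mul_zero]
      rw [Finset.sum_ite_eq (Finset.range (M+1)) n (fun i => a i q),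
        if_pos (Finset.mem_range.2 (by omega))]
    have hcqM : c M * q ^ μ M ≠ 0 :=
      mul_ne_zero (hc M le_rfl) (Real.rpow_pos_of_pos hq1.1 _).ne'
    have haM : a M q ≠ 0 := by
      intro h0
      have h1 := hq3 M le_rfl
      rw [h0, zero_sub, abs_neg] at h1
      have h2 : (1:ℝ) ≤ 2 ^ (M+1) := one_le_pow₀ (by norm_num)
      have h3 : 0 < |c M * q ^ μ M| := abs_pos.2 hcqM
      have h4 : (1/2:ℝ)/2^(M+1) ≤ 1/2 := div_le_self (by norm_num) h2
      nlinarith [mul_le_mul_of_nonneg_right h4 (abs_nonneg (c M * q ^ μ M))]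
    have hPne : P ≠ 0 := by
      intro h0
      apply haM
      have := hPcoeff M le_rfl
      rw [h0] at this
      simpa using this.symm
    have hPdeg : P.natDegree ≤ M := by
      apply natDegree_le_iff_coeff_eq_zero.2
      intro N hN
      rw [hPdef, finset_sum_coeff]
      apply Finset.sum_eq_zero
      intro i hi
      rw [coeff_C_mul, coeff_X_pow, if_neg, mul_zero]
      have := Finset.mem_range.1 hi
      omega
    by_contra hnotex
    push_neg at hnotex
    set sF : Finset ℝ := (Finset.Icc 1 M).image (fun k => Er k q) with hsFdef
    have hinj : Set.InjOn (fun k => Er k q) (Finset.Icc 1 M) := by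
      intro x hx y hy hxy
      by_contra hne
      rcases Finset.mem_Icc.1 hx with ⟨hx1, hx2⟩
      rcases Finset.mem_Icc.1 hy with ⟨hy1, hy2⟩
      rcases lt_or_gt_of_ne hne with h | h
      · exact absurd hxy (ne_of_lt (hord q hq x y hx1 h hy2))
      · exact absurd hxy.symm (ne_of_lt (hord q hq y x hy1 h hx2))
    have hcard1 : sF.card = M := by
      rw [hsFdef, Finset.card_image_of_injOn hinj, Nat.card_Icc]
      omega
    have hEnot : E ∉ sF := by
      intro hEin
      obtain ⟨k, hk, hEk⟩ := Finset.mem_image.1 hEin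
      rcases Finset.mem_Icc.1 hk with ⟨hk1, hk2⟩
      exact hnotex k hk1 hk2 hEk.symm
    have hsub2 : insert E sF ⊆ P.roots.toFinset := by
      intro x hx
      rw [Multiset.mem_toFinset, mem_roots hPne]
      rcases Finset.mem_insert.1 hx with h | h
      · subst h
        show P.eval x = 0
        rw [hPeval]; exact hE
      · obtain ⟨k, hk, hEk⟩ := Finset.mem_image.1 h
        rcases Finset.mem_Icc.1 hk with ⟨hk1, hk2⟩
        show P.eval x = 0
        rw [hPeval, ← hEk]
        exact (hEr q hq k hk1 hk2).2
    have hfin : M + 1 ≤ M := by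
      calc M + 1 = (insert E sF).card := by
            rw [Finset.card_insert_of_notMem hEnot, hcard1]
        _ ≤ P.roots.toFinset.card := Finset.card_le_card hsub2
        _ ≤ Multiset.card P.roots := Multiset.toFinset_card_le _
        _ ≤ P.natDegree := P.card_roots'
        _ ≤ M := hPdeg
    omega
  refine ⟨q₀, hq₀mem, Er, ?_, ?_⟩
  · intro q hq
    exact ⟨fun k hk1 hkM => (hEr q hq k hk1 hkM).2, hord q hq, hcomp q hq⟩
  · intro k hk1 hkM
    rw [Metric.tendsto_nhds]
    intro ε hε
    set ε' : ℝ := min ε (1/2) with hε'def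
    have hε'0 : 0 < ε' := lt_min hε one_half_pos
    have hε'h : ε' ≤ 1/2 := min_le_right _ _
    have hε'ε : ε' ≤ ε := min_le_left _ _
    have hIooq₀ : ∀ᶠ q in l, q ∈ Ioo (0:ℝ) q₀ :=
      Ioo_mem_nhdsGT_of_mem (by constructor; exacts [le_rfl, hq₀mem.1])
    filter_upwards [hIooq₀, hsep_ev, hclose_ev ε' hε'0] with q hq1 hq2 hq3
    obtain ⟨hg1, hg2, hg3⟩ := hgood q hq1
    have hK1 : 1 ≤ M+1-k := by omega
    have hKM : M+1-k ≤ M := by omega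
    obtain ⟨E, hEI, hE0⟩ := hroot q hg1 hq2 ε' hε'0 hε'h hq3 (M+1-k) hK1 hKM
    obtain ⟨kk, hkk1, hkkM, hEkk⟩ := hcomp q hq1 E hE0
    have hrrK : 0 < d (M+1-k) * q ^ ρ (M+1-k) :=
      mul_pos (hd _ hK1 hKM) (Real.rpow_pos_of_pos hg1.1 _)
    have hkkk : kk = k := by
      by_contra hne
      have hI2 := (hEr q hq1 kk hkk1 hkkM).1
      rw [← hEkk] at hI2
      have hKne : M+1-kk ≠ M+1-k := by omega
      have hrrK' : 0 < d (M+1-kk) * q ^ ρ (M+1-kk) :=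
        mul_pos (hd _ (by omega) (by omega)) (Real.rpow_pos_of_pos hg1.1 _)
      rcases lt_or_gt_of_ne hKne with h | h
      · have hsepq := hq2 (M+1-kk) (M+1-k) (by omega) h hKM
        have ha1 := hEI.2
        have ha2 := hI2.1
        linarith [mul_le_mul_of_nonneg_right hε'h hrrK.le]
      · have hsepq := hq2 (M+1-k) (M+1-kk) hK1 h (by omega)
        have ha1 := hEI.1
        have ha2 := hI2.2
        linarith [mul_le_mul_of_nonneg_right hε'h hrrK.le]
    rw [hkkk] at hEkk
    rw [← hEkk, Real.dist_eq]
    have h1 : E / (-d (M+1-k) * q ^ ρ (M+1-k)) = (-E) / (d (M+1-k) * q ^ ρ (M+1-k)) := by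
      ring
    rw [h1, abs_lt]
    have h2 : (1-ε') < (-E) / (d (M+1-k) * q ^ ρ (M+1-k)) := by
      rw [lt_div_iff₀ hrrK]
      have := hEI.2
      nlinarith
    have h3 : (-E) / (d (M+1-k) * q ^ ρ (M+1-k)) < 1+ε' := by
      rw [div_lt_iff₀ hrrK]
      have := hEI.1
      nlinarith
    constructor <;> linarith
end

section
/- Let B_j (j = 1,…,N+1) denote the ordered real roots of the limiting spectral polynomial c̃_{N+1}(B), and E_j(q) the ordered real roots of the q-Heun spectral polynomial c_{N+1}(E). Under the hypotheses guaranteeing real simple roots for both (t₁t₂ > 0, α₂-α₁ < 1, β > -1, N = -λ₁-α₁ ∈ ℤ_{≥0}, all parameters real), one has B_j = C₂ + lim_{q→1⁻} [E_j(q) + 2(t₁+t₂) + (q-1)C₁]/(q-1)², where C₁ = (α₁+α₂)(t₁+t₂) + (l₁+h₁)t₁ + (l₂+h₂)t₂ and C₂ = (t₁/2){h₁² + (α₁+α₂+l₁-1)² - 1/2} + (t₂/2){h₂² + (α₁+α₂+l₂-1)² - 1/2}. -/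
open Polynomial Filter Set


lemma lim1 (r : ℝ) :
    Tendsto (fun q : ℝ => (q ^ r - 1) / (q - 1)) (nhdsWithin 1 (Iio 1)) (nhds r) := by
  have h : HasDerivAt (fun q : ℝ => q ^ r) (r * (1:ℝ) ^ (r - 1)) 1 :=
    Real.hasDerivAt_rpow_const (Or.inl one_ne_zero)
  have h2 := hasDerivAt_iff_tendsto_slope.mp h
  have h3 : Tendsto (slope (fun q : ℝ => q ^ r) 1) (nhdsWithin 1 (Iio 1)) (nhds (r * (1:ℝ) ^ (r-1))) :=
    h2.mono_left (nhdsWithin_mono 1 (fun x hx => ne_of_lt hx))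
  have h4 : r * (1:ℝ) ^ (r - 1) = r := by rw [Real.one_rpow]; ring
  rw [h4] at h3
  refine h3.congr (fun q => ?_)
  rw [slope_def_field, Real.one_rpow]

lemma limq (r : ℝ) :
    Tendsto (fun q : ℝ => q ^ r) (nhdsWithin 1 (Iio 1)) (nhds 1) := by
  have h : ContinuousAt (fun q : ℝ => q ^ r) 1 :=
    Real.continuousAt_rpow_const 1 r (Or.inl one_ne_zero)
  have := h.tendsto.mono_left (nhdsWithin_le_nhds (s := Iio (1:ℝ)))
  simpa [Real.one_rpow] using this

lemma lim2 (r : ℝ) :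
    Tendsto (fun q : ℝ => (q ^ r - 1 - r * (q - 1)) / (q - 1) ^ 2)
      (nhdsWithin 1 (Iio 1)) (nhds (r * (r - 1) / 2)) := by
  have hIoo : Ioo (0:ℝ) 1 ∈ nhdsWithin (1:ℝ) (Iio 1) := Ioo_mem_nhdsLT one_pos
  apply HasDerivAt.lhopital_zero_nhdsLT
    (f' := fun q => r * q ^ (r - 1) - r) (g' := fun q => 2 * (q - 1))
  · filter_upwards [hIoo] with q hq
    have h1 : HasDerivAt (fun q : ℝ => q ^ r) (r * q ^ (r - 1)) q :=
      Real.hasDerivAt_rpow_const (Or.inl (ne_of_gt hq.1))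
    have h2 : HasDerivAt (fun q : ℝ => 1 + r * (q - 1)) (r * 1) q :=
      (((hasDerivAt_id q).sub_const 1).const_mul r).const_add 1
    have := h1.sub h2
    convert this using 1
    · rfl
    · rfl
    · funext x; simp only [Pi.sub_apply]; ring
    · ring
  · filter_upwards with q
    have : HasDerivAt (fun q : ℝ => (q - 1) ^ 2) ((2:ℕ) * (q - 1) ^ (2 - 1) * 1) q :=
      ((hasDerivAt_id q).sub_const 1).pow 2
    convert this using 1
    push_cast
    ring
  · filter_upwards [self_mem_nhdsWithin] with q hq
    have hlt : q < 1 := hq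
    have : q - 1 < 0 := by linarith
    intro hcon
    nlinarith [hcon]
  · have := (limq r).sub (tendsto_const_nhds (x := (1:ℝ)))
    have h2 : Tendsto (fun q : ℝ => r * (q - 1)) (nhdsWithin 1 (Iio 1)) (nhds 0) := by
      have : Tendsto (fun q : ℝ => q - 1) (nhdsWithin 1 (Iio 1)) (nhds 0) := by
        have h := ((continuous_id (X := ℝ)).sub (continuous_const (y := (1:ℝ)))).tendsto (1:ℝ)
        simpa [Pi.sub_def] using h.mono_left (nhdsWithin_le_nhds (s := Iio (1:ℝ)))
      simpa using this.const_mul r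
    have h3 := this.sub h2
    simpa using h3
  · have : Tendsto (fun q : ℝ => (q - 1) ^ 2) (nhdsWithin 1 (Iio 1)) (nhds 0) := by
      have h := (((continuous_id (X := ℝ)).sub (continuous_const (y := (1:ℝ)))).pow 2).tendsto (1:ℝ)
      simpa [Pi.sub_def, Pi.pow_def] using h.mono_left (nhdsWithin_le_nhds (s := Iio (1:ℝ)))
    exact this
  · have h1 := (lim1 (r - 1)).const_mul (r / 2)
    have : r / 2 * (r - 1) = r * (r - 1) / 2 := by ring
    rw [this] at h1
    refine h1.congr' ?_
    filter_upwards [self_mem_nhdsWithin] with q hq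
    have hq1 : q - 1 ≠ 0 := by
      simp only [mem_Iio] at hq; exact sub_ne_zero.mpr (ne_of_lt hq)
    field_simp

lemma mono_lower (σ : ℕ → ℕ) (M : ℕ)
    (hmap : ∀ j, 1 ≤ j → j ≤ M → 1 ≤ σ j)
    (hmono : ∀ j j', 1 ≤ j → j < j' → j' ≤ M → σ j < σ j') :
    ∀ j, 1 ≤ j → j ≤ M → j ≤ σ j := by
  intro j
  induction j with
  | zero => omega
  | succ k ih =>
    intro h1 h2
    rcases Nat.eq_or_lt_of_le h1 with h | h
    · have := hmap (k+1) h1 h2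
      omega
    · have hk1 : 1 ≤ k := by omega
      have hk2 : k ≤ M := by omega
      have := ih hk1 hk2
      have := hmono k (k+1) hk1 (by omega) h2
      omega

lemma mono_id (σ : ℕ → ℕ) (M : ℕ)
    (hmap : ∀ j, 1 ≤ j → j ≤ M → 1 ≤ σ j ∧ σ j ≤ M)
    (hmono : ∀ j j', 1 ≤ j → j < j' → j' ≤ M → σ j < σ j') :
    ∀ j, 1 ≤ j → j ≤ M → σ j = j := by
  have hlow := mono_lower σ M (fun j h1 h2 => (hmap j h1 h2).1) hmono
  set τ : ℕ → ℕ := fun j => M + 1 - σ (M + 1 - j) with hτ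
  have hτlow : ∀ j, 1 ≤ j → j ≤ M → j ≤ τ j := by
    apply mono_lower
    · intro j h1 h2
      have := hmap (M + 1 - j) (by omega) (by omega)
      simp only [hτ]
      omega
    · intro j j' h1 hlt h2
      have h3 := hmono (M + 1 - j') (M + 1 - j) (by omega) (by omega) (by omega)
      have h4 := hmap (M + 1 - j) (by omega) (by omega)
      have h5 := hmap (M + 1 - j') (by omega) (by omega)
      simp only [hτ]
      omega
  intro j h1 h2
  have := hlow j h1 h2
  have h6 := hτlow (M + 1 - j) (by omega) (by omega)
  have h7 : M + 1 - (M + 1 - j) = j := by omega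
  simp only [hτ, h7] at h6
  have h8 := (hmap j h1 h2).2
  omega

lemma ctdeg (ct : ℕ → Polynomial ℝ) (κ a s : ℕ → ℝ) (h0 : ct 0 = 1)
    (h1 : C (κ 1) * ct 1 = (X + C (a 1)) * ct 0)
    (hr : ∀ n, 2 ≤ n → C (κ n) * ct n
        = (X + C (a n)) * ct (n - 1) - C (s n) * ct (n - 2)) :
    ∀ n, ct n ≠ 0 ∧ (ct n).natDegree = n ∧ (1 ≤ n → κ n ≠ 0) := by
  intro n
  induction n using Nat.strong_induction_on with
  | _ n ih =>
    match n with
    | 0 => simp [h0]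
    | 1 =>
      rw [h0, mul_one] at h1
      have hX : (X + C (a 1) : Polynomial ℝ) ≠ 0 := X_add_C_ne_zero (a 1)
      have hκ : κ 1 ≠ 0 := by
        intro hk
        rw [hk, map_zero, zero_mul] at h1
        exact hX h1.symm
      have hct : ct 1 ≠ 0 := by
        intro hc
        rw [hc, mul_zero] at h1
        exact hX h1.symm
      refine ⟨hct, ?_, fun _ => hκ⟩
      have := congrArg natDegree h1
      rwa [natDegree_C_mul hκ, natDegree_X_add_C] at this
    | (m+2) =>
      have ih1 := ih (m+1) (by omega)
      have ih0 := ih m (by omega)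
      have hrec := hr (m+2) (by omega)
      simp only [Nat.add_sub_cancel] at hrec
      have hm1 : m + 2 - 1 = m + 1 := by omega
      have hm2 : m + 2 - 2 = m := by omega
      rw [hm1] at hrec
      have hX : (X + C (a (m+2)) : Polynomial ℝ) ≠ 0 := X_add_C_ne_zero _
      have hdmul : ((X + C (a (m+2))) * ct (m+1)).natDegree = m + 2 := by
        rw [natDegree_mul hX ih1.1, natDegree_X_add_C, ih1.2.1]
        omega
      have hdsub : ((X + C (a (m+2))) * ct (m+1) - C (s (m+2)) * ct m).natDegree = m + 2 := by
        rw [natDegree_sub_eq_left_of_natDegree_lt]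
        · exact hdmul
        · rw [hdmul]
          calc (C (s (m+2)) * ct m).natDegree ≤ (ct m).natDegree := natDegree_C_mul_le _ _
            _ = m := ih0.2.1
            _ < m + 2 := by omega
      have hRHS : (X + C (a (m+2))) * ct (m+1) - C (s (m+2)) * ct m ≠ 0 := by
        intro hz
        rw [hz] at hdsub
        simp at hdsub
      have hκ : κ (m+2) ≠ 0 := by
        intro hk
        rw [hk, map_zero, zero_mul] at hrec
        exact hRHS hrec.symm
      have hct : ct (m+2) ≠ 0 := by
        intro hc
        rw [hc, mul_zero] at hrec
        exact hRHS hrec.symm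
      refine ⟨hct, ?_, fun _ => hκ⟩
      have := congrArg natDegree hrec
      rwa [natDegree_C_mul hκ, hdsub] at this

lemma midlim (h₁ h₂ l₁ l₂ α₁ α₂ t₁ t₂ lam C₁ C₂ : ℝ)
    (hC₁ : C₁ = (α₁ + α₂) * (t₁ + t₂) + (l₁ + h₁) * t₁ + (l₂ + h₂) * t₂)
    (hC₂ : C₂ = t₁ / 2 * (h₁ ^ 2 + (α₁ + α₂ + l₁ - 1) ^ 2 - 1/2)
        + t₂ / 2 * (h₂ ^ 2 + (α₁ + α₂ + l₂ - 1) ^ 2 - 1/2))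
    (w x : ℝ) :
    Tendsto (fun q : ℝ =>
      ((-2*(t₁+t₂) - (q-1)*C₁ + (q-1)^2*(x - C₂)) * q ^ (w - 1 + lam)
        + (q ^ ((1:ℝ)/2) * (q ^ h₁ * t₁ + q ^ h₂ * t₂)
           + (q ^ l₁ * t₁ + q ^ l₂ * t₂) * q ^ (2*(w + lam) + α₁ + α₂ - 5/2))) / (q-1)^2)
      (nhdsWithin 1 (Iio 1))
      (nhds (x + (w + lam - 1) * ((w + lam - h₁ + l₁ + α₁ + α₂ - 2) * t₁
          + (w + lam - h₂ + l₂ + α₁ + α₂ - 2) * t₂))) := by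
  subst hC₁ hC₂
  set μ := w - 1 + lam with hμ
  set ν := 2*(w + lam) + α₁ + α₂ - 5/2 with hν
  set a1 := (1:ℝ)/2 + h₁ with ha1
  set a2 := (1:ℝ)/2 + h₂ with ha2
  set a3 := l₁ + ν with ha3
  set a4 := l₂ + ν with ha4
  set C₁ := (α₁ + α₂) * (t₁ + t₂) + (l₁ + h₁) * t₁ + (l₂ + h₂) * t₂ with hC₁
  set C₂ := t₁ / 2 * (h₁ ^ 2 + (α₁ + α₂ + l₁ - 1) ^ 2 - 1/2)
        + t₂ / 2 * (h₂ ^ 2 + (α₁ + α₂ + l₂ - 1) ^ 2 - 1/2) with hC₂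
  set T : ℝ → ℝ → ℝ := fun r q => (q ^ r - 1 - r * (q - 1)) / (q - 1) ^ 2 with hT
  have hF : Tendsto (fun q : ℝ =>
      (x - C₂) * q ^ μ + (-2*(t₁+t₂)) * T μ q + t₁ * T a1 q + t₂ * T a2 q
        + t₁ * T a3 q + t₂ * T a4 q - C₁ * ((q ^ μ - 1)/(q - 1)))
      (nhdsWithin 1 (Iio 1))
      (nhds ((x - C₂) * 1 + (-2*(t₁+t₂)) * (μ*(μ-1)/2) + t₁ * (a1*(a1-1)/2)
        + t₂ * (a2*(a2-1)/2) + t₁ * (a3*(a3-1)/2) + t₂ * (a4*(a4-1)/2) - C₁ * μ)) := by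
    exact ((((((tendsto_const_nhds.mul (limq μ)).add
      ((lim2 μ).const_mul _)).add ((lim2 a1).const_mul _)).add
      ((lim2 a2).const_mul _)).add ((lim2 a3).const_mul _)).add
      ((lim2 a4).const_mul _)).sub ((lim1 μ).const_mul _)
  have hval : (x - C₂) * 1 + (-2*(t₁+t₂)) * (μ*(μ-1)/2) + t₁ * (a1*(a1-1)/2)
        + t₂ * (a2*(a2-1)/2) + t₁ * (a3*(a3-1)/2) + t₂ * (a4*(a4-1)/2) - C₁ * μ
      = x + (w + lam - 1) * ((w + lam - h₁ + l₁ + α₁ + α₂ - 2) * t₁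
          + (w + lam - h₂ + l₂ + α₁ + α₂ - 2) * t₂) := by
    simp only [ha1, ha2, ha3, ha4, hν, hμ, hC₁, hC₂]; ring
  rw [hval] at hF
  refine hF.congr' ?_
  filter_upwards [Ioo_mem_nhdsLT one_pos] with q hq
  have hq0 : (0:ℝ) < q := hq.1
  have hs : q - 1 ≠ 0 := sub_ne_zero.mpr (ne_of_lt hq.2)
  have e1 : q ^ a1 = q ^ ((1:ℝ)/2) * q ^ h₁ := by rw [ha1, Real.rpow_add hq0]
  have e2 : q ^ a2 = q ^ ((1:ℝ)/2) * q ^ h₂ := by rw [ha2, Real.rpow_add hq0]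
  have e3 : q ^ a3 = q ^ l₁ * q ^ ν := by rw [ha3, Real.rpow_add hq0]
  have e4 : q ^ a4 = q ^ l₂ * q ^ ν := by rw [ha4, Real.rpow_add hq0]
  rw [hT]
  simp only
  rw [e1, e2, e3, e4]
  field_simp
  ring

lemma Klim (t₁ t₂ h₁ h₂ β w : ℝ) :
    Tendsto (fun q : ℝ => t₁ * t₂ * q ^ (h₁ + h₂) * (1 - q ^ w) * (1 - q ^ (w - β)) / (q-1)^2)
      (nhdsWithin 1 (Iio 1)) (nhds (t₁ * t₂ * w * (w - β))) := by
  have hF : Tendsto (fun q : ℝ =>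
      t₁ * t₂ * q ^ (h₁ + h₂) * ((q ^ w - 1)/(q-1)) * ((q ^ (w - β) - 1)/(q-1)))
      (nhdsWithin 1 (Iio 1)) (nhds (t₁ * t₂ * 1 * w * (w - β))) :=
    (((tendsto_const_nhds.mul (limq (h₁ + h₂))).mul (lim1 w)).mul (lim1 (w - β)))
  rw [show t₁ * t₂ * 1 * w * (w - β) = t₁ * t₂ * w * (w - β) by ring] at hF
  refine hF.congr' ?_
  filter_upwards [self_mem_nhdsWithin] with q hq
  have hs : q - 1 ≠ 0 := sub_ne_zero.mpr (ne_of_lt hq)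
  field_simp
  ring

lemma Slim (r₁ r₂ : ℝ) :
    Tendsto (fun q : ℝ => q * (1 - q ^ r₁) * (1 - q ^ r₂) / (q-1)^2)
      (nhdsWithin 1 (Iio 1)) (nhds (r₁ * r₂)) := by
  have hid : Tendsto (fun q : ℝ => q) (nhdsWithin 1 (Iio 1)) (nhds 1) :=
    tendsto_id.mono_left nhdsWithin_le_nhds
  have hF : Tendsto (fun q : ℝ => q * ((q ^ r₁ - 1)/(q-1)) * ((q ^ r₂ - 1)/(q-1)))
      (nhdsWithin 1 (Iio 1)) (nhds (1 * r₁ * r₂)) :=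
    (hid.mul (lim1 r₁)).mul (lim1 r₂)
  rw [show (1:ℝ) * r₁ * r₂ = r₁ * r₂ by ring] at hF
  refine hF.congr' ?_
  filter_upwards [self_mem_nhdsWithin] with q hq
  have hs : q - 1 ≠ 0 := sub_ne_zero.mpr (ne_of_lt hq)
  field_simp
  ring

lemma steplim (E2 E1 E0 Kq Gq Sq : ℝ → ℝ) (L1 L0 LK LG LS : ℝ)
    (heq : ∀ q ∈ Ioo (0:ℝ) 1, E2 q * Kq q = E1 q * Gq q - E0 q * Sq q)
    (hKne : ∀ q ∈ Ioo (0:ℝ) 1, Kq q ≠ 0)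
    (h1 : Tendsto E1 (nhdsWithin 1 (Iio 1)) (nhds L1))
    (h0 : Tendsto E0 (nhdsWithin 1 (Iio 1)) (nhds L0))
    (hG : Tendsto (fun q => Gq q / (q-1)^2) (nhdsWithin 1 (Iio 1)) (nhds LG))
    (hK : Tendsto (fun q => Kq q / (q-1)^2) (nhdsWithin 1 (Iio 1)) (nhds LK)) (hLK : LK ≠ 0)
    (hS : Tendsto (fun q => Sq q / (q-1)^2) (nhdsWithin 1 (Iio 1)) (nhds LS)) :
    Tendsto E2 (nhdsWithin 1 (Iio 1)) (nhds ((L1 * LG - L0 * LS) / LK)) := by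
  have hdiv := ((h1.mul hG).sub (h0.mul hS)).div hK hLK
  refine hdiv.congr' ?_
  filter_upwards [Ioo_mem_nhdsLT one_pos] with q hq
  have hs : ((q:ℝ)-1)^2 ≠ 0 := pow_ne_zero 2 (sub_ne_zero.mpr (ne_of_lt hq.2))
  have h2 : E1 q * (Gq q/(q-1)^2) - E0 q * (Sq q/(q-1)^2)
      = (E1 q * Gq q - E0 q * Sq q) / (q-1)^2 := by ring
  show (E1 q * (Gq q/(q-1)^2) - E0 q * (Sq q/(q-1)^2)) / (Kq q/(q-1)^2) = E2 q
  rw [h2, div_div_div_comm, div_self hs, div_one, div_eq_iff (hKne q hq)]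
  exact (heq q hq).symm

set_option maxHeartbeats 4000000 in
/-- each ordered root `E_j(q)` of the q-Heun spectral polynomial
converges, after the affine rescaling `E = -2(t₁+t₂) - (q-1)C₁ + (q-1)²(B-C₂)`, to the
corresponding ordered root `B_j` of the limiting spectral polynomial as `q → 1⁻`:
`B_j = C₂ + lim_{q→1⁻} [E_j(q) + 2(t₁+t₂) + (q-1)C₁]/(q-1)²`. -/
theorem stmt18 (h₁ h₂ l₁ l₂ α₁ α₂ β t₁ t₂ lam C₁ C₂ : ℝ)
    (hlam : lam = (h₁ + h₂ - l₁ - l₂ - α₁ - α₂ - β + 2) / 2)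
    (N : ℕ) (hN : (N : ℝ) = -lam - α₁)
    (ht : 0 < t₁ * t₂) (hα : α₂ - α₁ < 1) (hβ : -1 < β)
    (hC₁ : C₁ = (α₁ + α₂) * (t₁ + t₂) + (l₁ + h₁) * t₁ + (l₂ + h₂) * t₂)
    (hC₂ : C₂ = t₁ / 2 * (h₁ ^ 2 + (α₁ + α₂ + l₁ - 1) ^ 2 - 1/2)
        + t₂ / 2 * (h₂ ^ 2 + (α₁ + α₂ + l₂ - 1) ^ 2 - 1/2))
    -- the q-Heun spectral polynomial family `c`
    (c : ℕ → ℝ → Polynomial ℝ) (hc0 : ∀ q, c 0 q = 1)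
    (hc1 : ∀ q ∈ Ioo (0 : ℝ) 1,
      c 1 q * C (t₁ * t₂ * q ^ (h₁ + h₂) * (1 - q ^ (1 : ℝ)) * (1 - q ^ ((1 : ℝ) - β)))
      = c 0 q * (X * C (q ^ ((1 : ℝ) - 1 + lam))
          + C (q ^ ((1 : ℝ)/2) * (q ^ h₁ * t₁ + q ^ h₂ * t₂)
              + (q ^ l₁ * t₁ + q ^ l₂ * t₂) * q ^ (2 * ((1 : ℝ) + lam) + α₁ + α₂ - 5/2))))
    (hrec : ∀ q ∈ Ioo (0 : ℝ) 1, ∀ n : ℕ, 2 ≤ n →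
      c n q * C (t₁ * t₂ * q ^ (h₁ + h₂) * (1 - q ^ (n : ℝ)) * (1 - q ^ ((n : ℝ) - β)))
      = c (n - 1) q * (X * C (q ^ ((n : ℝ) - 1 + lam))
          + C (q ^ ((1 : ℝ)/2) * (q ^ h₁ * t₁ + q ^ h₂ * t₂)
              + (q ^ l₁ * t₁ + q ^ l₂ * t₂) * q ^ (2 * ((n : ℝ) + lam) + α₁ + α₂ - 5/2)))
        - c (n - 2) q
            * C (q * (1 - q ^ ((n : ℝ) - 2 + lam + α₁)) * (1 - q ^ ((n : ℝ) - 2 + lam + α₂))))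
    -- the limiting (q → 1) spectral polynomial family `ct`
    (ct : ℕ → Polynomial ℝ) (hct0 : ct 0 = 1)
    (hct1 : C ((1 : ℝ) * (1 - β) * t₁ * t₂) * ct 1
      = (X + C ((1 + lam - 1) * ((1 + lam - h₁ + l₁ + α₁ + α₂ - 2) * t₁
          + (1 + lam - h₂ + l₂ + α₁ + α₂ - 2) * t₂))) * ct 0)
    (hctrec : ∀ n : ℕ, 2 ≤ n →
      C ((n : ℝ) * (n - β) * t₁ * t₂) * ct n
        = (X + C (((n : ℝ) + lam - 1) * (((n : ℝ) + lam - h₁ + l₁ + α₁ + α₂ - 2) * t₁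
            + ((n : ℝ) + lam - h₂ + l₂ + α₁ + α₂ - 2) * t₂))) * ct (n - 1)
          - C (((n : ℝ) - 2 + lam + α₁) * ((n : ℝ) - 2 + lam + α₂)) * ct (n - 2))
    -- `Er j q` are the ordered real roots of the q-Heun spectral polynomial
    (Er : ℕ → ℝ → ℝ)
    (hEr : ∀ q ∈ Ioo (0 : ℝ) 1,
      (∀ j, 1 ≤ j → j ≤ N + 1 → (c (N + 1) q).eval (Er j q) = 0)
      ∧ (∀ j j', 1 ≤ j → j < j' → j' ≤ N + 1 → Er j q < Er j' q)
      ∧ (∀ x : ℝ, (c (N + 1) q).eval x = 0 → ∃ j, 1 ≤ j ∧ j ≤ N + 1 ∧ x = Er j q))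
    -- `Bv j` are the ordered real roots of the limiting spectral polynomial
    (Bv : ℕ → ℝ)
    (hBv : (∀ j, 1 ≤ j → j ≤ N + 1 → (ct (N + 1)).eval (Bv j) = 0)
      ∧ (∀ j j', 1 ≤ j → j < j' → j' ≤ N + 1 → Bv j < Bv j')
      ∧ (∀ x : ℝ, (ct (N + 1)).eval x = 0 → ∃ j, 1 ≤ j ∧ j ≤ N + 1 ∧ x = Bv j)) :
    ∀ j, 1 ≤ j → j ≤ N + 1 →
      Tendsto (fun q : ℝ => C₂ + (Er j q + 2 * (t₁ + t₂) + (q - 1) * C₁) / (q - 1) ^ 2)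
        (nhdsWithin 1 (Iio 1)) (nhds (Bv j)) := by
  intro j hj1 hj2
  have htt : t₁ * t₂ ≠ 0 := ne_of_gt ht
  have hct1' : C ((((1:ℕ):ℝ)) * (((1:ℕ):ℝ) - β) * t₁ * t₂) * ct 1
      = (X + C ((((1:ℕ):ℝ) + lam - 1) * ((((1:ℕ):ℝ) + lam - h₁ + l₁ + α₁ + α₂ - 2) * t₁
          + (((1:ℕ):ℝ) + lam - h₂ + l₂ + α₁ + α₂ - 2) * t₂))) * ct 0 := by
    rw [Nat.cast_one]; exact hct1
  have hdegβ := ctdeg ct (fun n => ((n:ℝ)) * ((n:ℝ) - β) * t₁ * t₂)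
      (fun n => ((n:ℝ) + lam - 1) * (((n:ℝ) + lam - h₁ + l₁ + α₁ + α₂ - 2) * t₁
          + ((n:ℝ) + lam - h₂ + l₂ + α₁ + α₂ - 2) * t₂))
      (fun n => ((n:ℝ) - 2 + lam + α₁) * ((n:ℝ) - 2 + lam + α₂)) hct0 hct1' hctrec
  have hb : ∀ n : ℕ, 1 ≤ n → ((n:ℝ) - β) ≠ 0 := by
    intro n hn h
    apply (hdegβ n).2.2 hn
    show (n:ℝ) * ((n:ℝ) - β) * t₁ * t₂ = 0
    rw [h]; ring
  have hne1 : ∀ q ∈ Ioo (0:ℝ) 1, ∀ r : ℝ, r ≠ 0 → (1 : ℝ) - q ^ r ≠ 0 := by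
    intro q hq r hr
    rcases lt_or_gt_of_ne hr with h | h
    · have : 1 < q ^ r := (Real.one_lt_rpow_iff_of_pos hq.1).mpr (Or.inr ⟨hq.2, h⟩)
      intro hcon; linarith
    · have : q ^ r < 1 := Real.rpow_lt_one (le_of_lt hq.1) hq.2 h
      intro hcon; linarith
  have hKne : ∀ n : ℕ, 1 ≤ n → ∀ q ∈ Ioo (0:ℝ) 1,
      t₁ * t₂ * q ^ (h₁+h₂) * (1 - q ^ (n:ℝ)) * (1 - q ^ ((n:ℝ) - β)) ≠ 0 := by
    intro n hn q hq
    have h1 : q ^ (h₁+h₂) ≠ 0 := (Real.rpow_pos_of_pos hq.1 _).ne'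
    have h2 : (1:ℝ) - q ^ (n:ℝ) ≠ 0 :=
      hne1 q hq _ (Nat.cast_ne_zero.mpr (by omega))
    have h3 := hne1 q hq _ (hb n hn)
    exact mul_ne_zero (mul_ne_zero (mul_ne_zero htt h1) h2) h3
  have hconv : ∀ n : ℕ, ∀ x : ℝ, Tendsto (fun q : ℝ =>
      eval (-2*(t₁+t₂) - (q-1)*C₁ + (q-1)^2*(x - C₂)) (c n q)) (nhdsWithin 1 (Iio 1))
      (nhds (eval x (ct n))) := by
    intro n
    induction n using Nat.strong_induction_on with
    | _ n ih =>
      match n with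
      | 0 =>
        intro x
        simp only [hc0, hct0, eval_one]
        exact tendsto_const_nhds
      | 1 =>
        intro x
        have h1β : (1:ℝ) - β ≠ 0 := by have := hb 1 le_rfl; rwa [Nat.cast_one] at this
        have hLK : t₁ * t₂ * 1 * (1 - β) ≠ 0 :=
          mul_ne_zero (mul_ne_zero htt one_ne_zero) h1β
        have hKne1 : ∀ q ∈ Ioo (0:ℝ) 1,
            t₁ * t₂ * q ^ (h₁+h₂) * (1 - q ^ (1:ℝ)) * (1 - q ^ ((1:ℝ) - β)) ≠ 0 := by
          intro q hq
          have := hKne 1 le_rfl q hq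
          rwa [Nat.cast_one] at this
        have hG := midlim h₁ h₂ l₁ l₂ α₁ α₂ t₁ t₂ lam C₁ C₂ hC₁ hC₂ 1 x
        have hK := Klim t₁ t₂ h₁ h₂ β 1
        have hS : Tendsto (fun q : ℝ => (0:ℝ) / (q-1)^2) (nhdsWithin 1 (Iio 1)) (nhds 0) := by
          simp only [zero_div]; exact tendsto_const_nhds
        have heq : ∀ q ∈ Ioo (0:ℝ) 1,
            eval (-2*(t₁+t₂) - (q-1)*C₁ + (q-1)^2*(x - C₂)) (c 1 q)
              * (t₁ * t₂ * q ^ (h₁+h₂) * (1 - q ^ (1:ℝ)) * (1 - q ^ ((1:ℝ) - β)))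
            = 1 * ((-2*(t₁+t₂) - (q-1)*C₁ + (q-1)^2*(x - C₂)) * q ^ ((1:ℝ) - 1 + lam)
                + (q ^ ((1:ℝ)/2) * (q ^ h₁ * t₁ + q ^ h₂ * t₂)
                   + (q ^ l₁ * t₁ + q ^ l₂ * t₂) * q ^ (2 * ((1:ℝ) + lam) + α₁ + α₂ - 5/2)))
              - 0 * 0 := by
          intro q hq
          have h := congrArg (eval (-2*(t₁+t₂) - (q-1)*C₁ + (q-1)^2*(x - C₂))) (hc1 q hq)
          simp only [eval_mul, eval_add, eval_C, eval_X, hc0, eval_one] at h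
          linear_combination h
        have hst := steplim
          (fun q => eval (-2*(t₁+t₂) - (q-1)*C₁ + (q-1)^2*(x - C₂)) (c 1 q))
          (fun _ => 1) (fun _ => 0)
          (fun q => t₁ * t₂ * q ^ (h₁+h₂) * (1 - q ^ (1:ℝ)) * (1 - q ^ ((1:ℝ) - β)))
          (fun q => (-2*(t₁+t₂) - (q-1)*C₁ + (q-1)^2*(x - C₂)) * q ^ ((1:ℝ) - 1 + lam)
              + (q ^ ((1:ℝ)/2) * (q ^ h₁ * t₁ + q ^ h₂ * t₂)
                 + (q ^ l₁ * t₁ + q ^ l₂ * t₂) * q ^ (2 * ((1:ℝ) + lam) + α₁ + α₂ - 5/2)))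
          (fun _ => 0) 1 0 (t₁ * t₂ * 1 * (1 - β))
          (x + ((1:ℝ) + lam - 1) * (((1:ℝ) + lam - h₁ + l₁ + α₁ + α₂ - 2) * t₁
              + ((1:ℝ) + lam - h₂ + l₂ + α₁ + α₂ - 2) * t₂)) 0
          heq hKne1 tendsto_const_nhds tendsto_const_nhds hG hK hLK hS
        have hval : (1 * (x + ((1:ℝ) + lam - 1) * (((1:ℝ) + lam - h₁ + l₁ + α₁ + α₂ - 2) * t₁
              + ((1:ℝ) + lam - h₂ + l₂ + α₁ + α₂ - 2) * t₂)) - 0 * 0)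
            / (t₁ * t₂ * 1 * (1 - β)) = eval x (ct 1) := by
          have h := congrArg (eval x) hct1
          simp only [eval_mul, eval_add, eval_C, eval_X, hct0, eval_one] at h
          rw [div_eq_iff hLK]
          linear_combination -h
        rw [hval] at hst
        exact hst
      | (m+2) =>
        intro x
        have hbm : ((m+2:ℕ):ℝ) - β ≠ 0 := hb (m+2) (by omega)
        have hLK : t₁ * t₂ * ((m+2:ℕ):ℝ) * (((m+2:ℕ):ℝ) - β) ≠ 0 :=
          mul_ne_zero (mul_ne_zero htt (Nat.cast_ne_zero.mpr (by omega))) hbm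
        have hG := midlim h₁ h₂ l₁ l₂ α₁ α₂ t₁ t₂ lam C₁ C₂ hC₁ hC₂ ((m+2:ℕ):ℝ) x
        have hK := Klim t₁ t₂ h₁ h₂ β ((m+2:ℕ):ℝ)
        have hS := Slim (((m+2:ℕ):ℝ) - 2 + lam + α₁) (((m+2:ℕ):ℝ) - 2 + lam + α₂)
        have heq : ∀ q ∈ Ioo (0:ℝ) 1,
            eval (-2*(t₁+t₂) - (q-1)*C₁ + (q-1)^2*(x - C₂)) (c (m+2) q)
              * (t₁ * t₂ * q ^ (h₁+h₂) * (1 - q ^ ((m+2:ℕ):ℝ)) * (1 - q ^ (((m+2:ℕ):ℝ) - β)))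
            = eval (-2*(t₁+t₂) - (q-1)*C₁ + (q-1)^2*(x - C₂)) (c (m+1) q)
                * ((-2*(t₁+t₂) - (q-1)*C₁ + (q-1)^2*(x - C₂)) * q ^ (((m+2:ℕ):ℝ) - 1 + lam)
                  + (q ^ ((1:ℝ)/2) * (q ^ h₁ * t₁ + q ^ h₂ * t₂)
                     + (q ^ l₁ * t₁ + q ^ l₂ * t₂)
                        * q ^ (2 * (((m+2:ℕ):ℝ) + lam) + α₁ + α₂ - 5/2)))
              - eval (-2*(t₁+t₂) - (q-1)*C₁ + (q-1)^2*(x - C₂)) (c m q)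
                * (q * (1 - q ^ (((m+2:ℕ):ℝ) - 2 + lam + α₁))
                    * (1 - q ^ (((m+2:ℕ):ℝ) - 2 + lam + α₂))) := by
          intro q hq
          have h := congrArg (eval (-2*(t₁+t₂) - (q-1)*C₁ + (q-1)^2*(x - C₂)))
            (hrec q hq (m+2) (by omega))
          simp only [eval_mul, eval_add, eval_sub, eval_C, eval_X,
            show m+2-1 = m+1 from rfl, show m+2-2 = m from rfl] at h
          linear_combination h
        have hst := steplim
          (fun q => eval (-2*(t₁+t₂) - (q-1)*C₁ + (q-1)^2*(x - C₂)) (c (m+2) q))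
          (fun q => eval (-2*(t₁+t₂) - (q-1)*C₁ + (q-1)^2*(x - C₂)) (c (m+1) q))
          (fun q => eval (-2*(t₁+t₂) - (q-1)*C₁ + (q-1)^2*(x - C₂)) (c m q))
          (fun q => t₁ * t₂ * q ^ (h₁+h₂) * (1 - q ^ ((m+2:ℕ):ℝ)) * (1 - q ^ (((m+2:ℕ):ℝ) - β)))
          (fun q => (-2*(t₁+t₂) - (q-1)*C₁ + (q-1)^2*(x - C₂)) * q ^ (((m+2:ℕ):ℝ) - 1 + lam)
              + (q ^ ((1:ℝ)/2) * (q ^ h₁ * t₁ + q ^ h₂ * t₂)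
                 + (q ^ l₁ * t₁ + q ^ l₂ * t₂) * q ^ (2 * (((m+2:ℕ):ℝ) + lam) + α₁ + α₂ - 5/2)))
          (fun q => q * (1 - q ^ (((m+2:ℕ):ℝ) - 2 + lam + α₁))
              * (1 - q ^ (((m+2:ℕ):ℝ) - 2 + lam + α₂)))
          (eval x (ct (m+1))) (eval x (ct m))
          (t₁ * t₂ * ((m+2:ℕ):ℝ) * (((m+2:ℕ):ℝ) - β))
          (x + (((m+2:ℕ):ℝ) + lam - 1) * ((((m+2:ℕ):ℝ) + lam - h₁ + l₁ + α₁ + α₂ - 2) * t₁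
              + (((m+2:ℕ):ℝ) + lam - h₂ + l₂ + α₁ + α₂ - 2) * t₂))
          ((((m+2:ℕ):ℝ) - 2 + lam + α₁) * (((m+2:ℕ):ℝ) - 2 + lam + α₂))
          heq (hKne (m+2) (by omega)) (ih (m+1) (by omega) x) (ih m (by omega) x)
          hG hK hLK hS
        have hval : (eval x (ct (m+1))
              * (x + (((m+2:ℕ):ℝ) + lam - 1) * ((((m+2:ℕ):ℝ) + lam - h₁ + l₁ + α₁ + α₂ - 2) * t₁
                + (((m+2:ℕ):ℝ) + lam - h₂ + l₂ + α₁ + α₂ - 2) * t₂))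
            - eval x (ct m) * ((((m+2:ℕ):ℝ) - 2 + lam + α₁) * (((m+2:ℕ):ℝ) - 2 + lam + α₂)))
            / (t₁ * t₂ * ((m+2:ℕ):ℝ) * (((m+2:ℕ):ℝ) - β)) = eval x (ct (m+2)) := by
          have h := congrArg (eval x) (hctrec (m+2) (by omega))
          simp only [eval_mul, eval_add, eval_sub, eval_C, eval_X,
            show m+2-1 = m+1 from rfl, show m+2-2 = m from rfl] at h
          rw [div_eq_iff hLK]
          linear_combination -h
        rw [hval] at hst
        exact hst
    -- Part 2: root localization
  obtain ⟨hBv1, hBv2, hBv3⟩ := hBv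
  have hP0 : ct (N+1) ≠ 0 := (hdegβ (N+1)).1
  have hPdeg : (ct (N+1)).natDegree = N + 1 := (hdegβ (N+1)).2.1
  have hBvinj : ∀ i i', 1 ≤ i → i ≤ N+1 → 1 ≤ i' → i' ≤ N+1 → Bv i = Bv i' → i = i' := by
    intro i i' h1 h2 h3 h4 he
    by_contra hne
    rcases lt_or_gt_of_ne hne with h | h
    · exact absurd he (ne_of_lt (hBv2 i i' h1 h h4))
    · exact absurd he.symm (ne_of_lt (hBv2 i' i h3 h h2))
  have hnodup : ((Finset.Icc 1 (N+1)).val.map Bv).Nodup := by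
    refine Multiset.Nodup.map_on ?_ (Finset.Icc 1 (N+1)).nodup
    intro i hi i' hi' he
    have hi2 := Finset.mem_Icc.mp (Finset.mem_val.mp hi)
    have hi'2 := Finset.mem_Icc.mp (Finset.mem_val.mp hi')
    exact hBvinj i i' hi2.1 hi2.2 hi'2.1 hi'2.2 he
  have hroots : ((Finset.Icc 1 (N+1)).val.map Bv) = (ct (N+1)).roots := by
    have hle : (Finset.Icc 1 (N+1)).val.map Bv ≤ (ct (N+1)).roots := by
      rw [Multiset.le_iff_count]
      intro a
      by_cases ha : a ∈ (Finset.Icc 1 (N+1)).val.map Bv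
      · rw [Multiset.count_eq_one_of_mem hnodup ha]
        rw [Multiset.one_le_count_iff_mem]
        obtain ⟨i, hi, rfl⟩ := Multiset.mem_map.mp ha
        have hi2 := Finset.mem_Icc.mp (Finset.mem_val.mp hi)
        exact Polynomial.mem_roots'.mpr ⟨hP0, hBv1 i hi2.1 hi2.2⟩
      · rw [Multiset.count_eq_zero_of_notMem ha]
        exact Nat.zero_le _
    apply Multiset.eq_of_le_of_card_le hle
    calc Multiset.card (ct (N+1)).roots ≤ (ct (N+1)).natDegree := Polynomial.card_roots' _
      _ = N + 1 := hPdeg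
      _ = Multiset.card ((Finset.Icc 1 (N+1)).val.map Bv) := by
          rw [Multiset.card_map]
          simp [Nat.card_Icc]
  have hevalP : ∀ y : ℝ, eval y (ct (N+1))
      = (ct (N+1)).leadingCoeff * ∏ i ∈ Finset.Icc 1 (N+1), (y - Bv i) := by
    intro y
    have hcard : Multiset.card (ct (N+1)).roots = (ct (N+1)).natDegree := by
      rw [← hroots, Multiset.card_map, hPdeg]
      simp [Nat.card_Icc]
    conv_lhs => rw [← Polynomial.C_leadingCoeff_mul_prod_multiset_X_sub_C hcard]
    rw [eval_mul, eval_C, eval_multiset_prod, ← hroots, Multiset.map_map, Multiset.map_map]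
    rw [Finset.prod]
    congr 1
    apply congrArg
    apply Multiset.map_congr rfl
    intro i _
    simp
  rw [Metric.tendsto_nhds]
  intro ε hε
  have hδex : ∃ δ : ℝ, 0 < δ ∧ δ ≤ ε ∧ ∀ i i', 1 ≤ i → i ≤ N+1 → 1 ≤ i' → i' ≤ N+1 →
      i < i' → 2*δ ≤ Bv i' - Bv i := by
    classical
    set pairs := ((Finset.Icc 1 (N+1)) ×ˢ (Finset.Icc 1 (N+1))).filter (fun p => p.1 < p.2)
      with hpairs
    set gapset : Finset ℝ := insert ε (pairs.image (fun p => (Bv p.2 - Bv p.1)/2)) with hgapset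
    have hgapne : gapset.Nonempty := ⟨ε, Finset.mem_insert_self _ _⟩
    refine ⟨gapset.min' hgapne, ?_, ?_, ?_⟩
    · rw [Finset.lt_min'_iff]
      intro y hy
      rw [hgapset] at hy
      rcases Finset.mem_insert.mp hy with rfl | hy
      · exact hε
      · obtain ⟨p, hp, rfl⟩ := Finset.mem_image.mp hy
        obtain ⟨hp1, hp2⟩ := Finset.mem_filter.mp hp
        obtain hmem := Finset.mem_product.mp hp1
        have := hBv2 p.1 p.2 (Finset.mem_Icc.mp hmem.1).1 hp2 (Finset.mem_Icc.mp hmem.2).2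
        linarith
    · exact Finset.min'_le _ _ (Finset.mem_insert_self _ _)
    · intro i i' h1 h2 h3 h4 hlt
      have hmem : ((i,i') : ℕ×ℕ) ∈ pairs := by
        rw [hpairs, Finset.mem_filter, Finset.mem_product]
        exact ⟨⟨Finset.mem_Icc.mpr ⟨h1,h2⟩, Finset.mem_Icc.mpr ⟨h3,h4⟩⟩, hlt⟩
      have := Finset.min'_le gapset _
        (Finset.mem_insert_of_mem (Finset.mem_image_of_mem (fun p => (Bv p.2 - Bv p.1)/2) hmem))
      simp only at this
      linarith
  obtain ⟨δ, hδpos, hδε, hδgap⟩ := hδex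
  have hsign : ∀ i, 1 ≤ i → i ≤ N+1 →
      eval (Bv i - δ) (ct (N+1)) * eval (Bv i + δ) (ct (N+1)) < 0 := by
    intro i h1 h2
    have himem : i ∈ Finset.Icc 1 (N+1) := Finset.mem_Icc.mpr ⟨h1,h2⟩
    have hAB : (∏ k ∈ Finset.Icc 1 (N+1), (Bv i - δ - Bv k))
        * (∏ k ∈ Finset.Icc 1 (N+1), (Bv i + δ - Bv k))
        = -(δ^2) * ∏ k ∈ (Finset.Icc 1 (N+1)).erase i,
            ((Bv i - δ - Bv k) * (Bv i + δ - Bv k)) := by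
      rw [← Finset.prod_mul_distrib, ← Finset.mul_prod_erase _ _ himem]
      congr 1
      ring
    have hR : 0 < ∏ k ∈ (Finset.Icc 1 (N+1)).erase i,
        ((Bv i - δ - Bv k) * (Bv i + δ - Bv k)) := by
      apply Finset.prod_pos
      intro k hk
      have hk1 := Finset.mem_Icc.mp (Finset.mem_of_mem_erase hk)
      have hkne : k ≠ i := Finset.ne_of_mem_erase hk
      rcases lt_or_gt_of_ne hkne with hlt | hgt
      · have := hδgap k i hk1.1 hk1.2 h1 h2 hlt
        apply mul_pos <;> linarith
      · have := hδgap i k h1 h2 hk1.1 hk1.2 hgt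
        apply mul_pos_of_neg_of_neg <;> linarith
    have hlc : (ct (N+1)).leadingCoeff ≠ 0 := leadingCoeff_ne_zero.mpr hP0
    have hlc2 : 0 < (ct (N+1)).leadingCoeff ^ 2 :=
      lt_of_le_of_ne (sq_nonneg _) (Ne.symm (pow_ne_zero 2 hlc))
    rw [hevalP, hevalP]
    have hABR : (ct (N+1)).leadingCoeff * (∏ k ∈ Finset.Icc 1 (N+1), (Bv i - δ - Bv k))
        * ((ct (N+1)).leadingCoeff * (∏ k ∈ Finset.Icc 1 (N+1), (Bv i + δ - Bv k)))
        = (ct (N+1)).leadingCoeff ^ 2 * (-(δ^2) * ∏ k ∈ (Finset.Icc 1 (N+1)).erase i,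
            ((Bv i - δ - Bv k) * (Bv i + δ - Bv k))) := by
      rw [← hAB]; ring
    rw [hABR]
    have hneg : -(δ^2) * ∏ k ∈ (Finset.Icc 1 (N+1)).erase i,
        ((Bv i - δ - Bv k) * (Bv i + δ - Bv k)) < 0 := by
      have := mul_pos (pow_pos hδpos 2) hR
      linarith
    exact mul_neg_of_pos_of_neg hlc2 hneg
  have hall : ∀ᶠ q in nhdsWithin (1:ℝ) (Iio 1), ∀ i ∈ Finset.Icc 1 (N+1),
      (eval (-2*(t₁+t₂) - (q-1)*C₁ + (q-1)^2*((Bv i - δ) - C₂)) (c (N+1) q))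
        * (eval (-2*(t₁+t₂) - (q-1)*C₁ + (q-1)^2*((Bv i + δ) - C₂)) (c (N+1) q)) < 0 := by
    rw [Filter.eventually_all_finset]
    intro i hi
    have hi2 := Finset.mem_Icc.mp hi
    exact ((hconv (N+1) (Bv i - δ)).mul (hconv (N+1) (Bv i + δ))).eventually_lt_const
      (hsign i hi2.1 hi2.2)
  filter_upwards [hall, Ioo_mem_nhdsLT one_pos] with q hq hq01
  obtain ⟨hEr1, hEr2, hEr3⟩ := hEr q hq01
  have hqs : q - 1 ≠ 0 := sub_ne_zero.mpr (ne_of_lt hq01.2)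
  have hs2 : (0:ℝ) < (q-1)^2 := by positivity
  have hB'mono : ∀ a b, Er a q < Er b q →
      C₂ + (Er a q + 2*(t₁+t₂) + (q-1)*C₁)/(q-1)^2
        < C₂ + (Er b q + 2*(t₁+t₂) + (q-1)*C₁)/(q-1)^2 := by
    intro a b hab
    have h3 : (Er a q + 2*(t₁+t₂) + (q-1)*C₁)/(q-1)^2
        < (Er b q + 2*(t₁+t₂) + (q-1)*C₁)/(q-1)^2 :=
      (div_lt_div_iff_of_pos_right hs2).mpr (by linarith)
    linarith
  have hroot2B' : ∀ r : ℝ,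
      eval (-2*(t₁+t₂) - (q-1)*C₁ + (q-1)^2*(r - C₂)) (c (N+1) q) = 0 →
      ∃ i, 1 ≤ i ∧ i ≤ N+1 ∧ r = C₂ + (Er i q + 2*(t₁+t₂) + (q-1)*C₁)/(q-1)^2 := by
    intro r hr
    obtain ⟨i, hi1, hi2, hie⟩ := hEr3 _ hr
    refine ⟨i, hi1, hi2, ?_⟩
    rw [← hie]
    field_simp
    ring
  have hex : ∀ i, ∃ i', 1 ≤ i → i ≤ N+1 → (1 ≤ i' ∧ i' ≤ N+1 ∧
      C₂ + (Er i' q + 2*(t₁+t₂) + (q-1)*C₁)/(q-1)^2 ∈ Ioo (Bv i - δ) (Bv i + δ)) := by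
    intro i
    by_cases hi : 1 ≤ i ∧ i ≤ N+1
    · have hsi := hq i (Finset.mem_Icc.mpr hi)
      have hcont : Continuous (fun y : ℝ =>
          eval (-2*(t₁+t₂) - (q-1)*C₁ + (q-1)^2*(y - C₂)) (c (N+1) q)) := by
        apply (c (N+1) q).continuous.comp
        continuity
      have hab : Bv i - δ ≤ Bv i + δ := by linarith
      rcases mul_neg_iff.mp hsi with ⟨hpos', hneg'⟩ | ⟨hneg', hpos'⟩
      · obtain ⟨r, hrI, hr0⟩ := intermediate_value_Ioo' hab hcont.continuousOn
          (Set.mem_Ioo.mpr ⟨hneg', hpos'⟩)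
        obtain ⟨i', hi'1, hi'2, hie⟩ := hroot2B' r hr0
        exact ⟨i', fun _ _ => ⟨hi'1, hi'2, hie ▸ hrI⟩⟩
      · obtain ⟨r, hrI, hr0⟩ := intermediate_value_Ioo hab hcont.continuousOn
          (Set.mem_Ioo.mpr ⟨hneg', hpos'⟩)
        obtain ⟨i', hi'1, hi'2, hie⟩ := hroot2B' r hr0
        exact ⟨i', fun _ _ => ⟨hi'1, hi'2, hie ▸ hrI⟩⟩
    · exact ⟨1, fun h1 h2 => absurd ⟨h1,h2⟩ hi⟩
  choose σ hσ using hex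
  have hσmono : ∀ a b, 1 ≤ a → a < b → b ≤ N+1 → σ a < σ b := by
    intro a b ha hab hb
    have Ha := hσ a ha (by omega)
    have Hb := hσ b (by omega) hb
    have hgap := hδgap a b ha (by omega) (by omega) hb hab
    have hlt : C₂ + (Er (σ a) q + 2*(t₁+t₂) + (q-1)*C₁)/(q-1)^2
        < C₂ + (Er (σ b) q + 2*(t₁+t₂) + (q-1)*C₁)/(q-1)^2 := by
      have h1 := Ha.2.2.2
      have h2 := Hb.2.2.1
      linarith [Ha.2.2.2, Hb.2.2.1]
    by_contra hc
    push_neg at hc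
    rcases eq_or_lt_of_le hc with he | hl
    · rw [he] at hlt; exact lt_irrefl _ hlt
    · have h4 := hEr2 (σ b) (σ a) Hb.1 hl Ha.2.1
      have := hB'mono (σ b) (σ a) h4
      linarith
  have hid := mono_id σ (N+1)
    (fun i h1 h2 => ⟨(hσ i h1 h2).1, (hσ i h1 h2).2.1⟩) hσmono
  have hj := (hσ j hj1 hj2).2.2
  rw [hid j hj1 hj2] at hj
  rw [Real.dist_eq, abs_lt]
  simp only [mem_Ioo] at hj
  constructor
  · linarith [hj.1]
  · linarith [hj.2]
end
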